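/- arXiv:2408.09711 — 12 statements merged into one kernel-verified Lean document; each statement's English description precedes it below -/
import Mathlib

section
/- Let Σ be a finite quasigroup and X ⊆ Σ^G a subshift closed under cellwise application of the quasigroup operations (multiplication, left division, right division). Then X has equal extension counts for every C ⊆ G \ {e}: the cardinality |F(x|C, e)| of the follower set at the identity does not depend on x ∈ X. -/
/-- The follower set at the identity of the configuration `x|D`:
symbols `a` such that `x|D ⊔ a^e` is globally valid in `X`. -/
def followerSetAt {G A : Type*} [Group G] (X : Set (G → A)) (D : Set G) (x : G → A) :
    Set A :=
  {a | ∃ w ∈ X, (∀ g ∈ D, w g = x g) ∧ w 1 = a}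

/-- Let `A` be a finite quasigroup (with multiplication `mul`, left division `ld` and
right division `rd`), and `X ⊆ A^G` a subshift closed under the cellwise application of
the quasigroup operations. Then `X` has equal extension counts for every
`C ⊆ G \ {e}`: the cardinality of the follower set at the identity does not depend on
the point of `X`. -/
theorem quasigroup_equal_extension_counts {G A : Type*} [Group G] [Finite A]
    [TopologicalSpace A] [DiscreteTopology A]
    (mul ld rd : A → A → A)
    (hld1 : ∀ a b, mul a (ld a b) = b) (hld2 : ∀ a b, ld a (mul a b) = b)
    (hrd1 : ∀ a b, mul (rd a b) b = a) (hrd2 : ∀ a b, rd (mul a b) b = a)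
    (X : Set (G → A)) (hclosed : IsClosed X)
    (hshift : ∀ g : G, ∀ x ∈ X, (fun h => x (g⁻¹ * h)) ∈ X)
    (hmulX : ∀ x ∈ X, ∀ y ∈ X, (fun g => mul (x g) (y g)) ∈ X)
    (hldX : ∀ x ∈ X, ∀ y ∈ X, (fun g => ld (x g) (y g)) ∈ X)
    (hrdX : ∀ x ∈ X, ∀ y ∈ X, (fun g => rd (x g) (y g)) ∈ X)
    (C : Set G) (hC : (1 : G) ∉ C) :
    ∀ x ∈ X, ∀ y ∈ X,
      (followerSetAt X C x).ncard = (followerSetAt X C y).ncard := by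
  have key : ∀ x ∈ X, ∀ y ∈ X,
      (followerSetAt X C x).ncard ≤ (followerSetAt X C y).ncard := by
    intro x hx y hy
    set c := rd (y 1) (x 1) with hc
    have hinj : Function.Injective (mul c) := by
      intro a b h
      have : ld c (mul c a) = ld c (mul c b) := by rw [h]
      rwa [hld2, hld2] at this
    have hsub : (mul c) '' followerSetAt X C x ⊆ followerSetAt X C y := by
      rintro _ ⟨a, ⟨w, hw, hwC, hw1⟩, rfl⟩
      refine ⟨fun g => mul (rd (y g) (x g)) (w g),
        hmulX _ (hrdX y hy x hx) w hw, ?_, ?_⟩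
      · intro g hg
        simp only [hwC g hg, hrd1]
      · simp only [hw1, hc]
    calc (followerSetAt X C x).ncard
        = ((mul c) '' followerSetAt X C x).ncard :=
          (Set.ncard_image_of_injective _ hinj).symm
      _ ≤ (followerSetAt X C y).ncard :=
          Set.ncard_le_ncard hsub (Set.toFinite _)
  intro x hx y hy
  exact le_antisymm (key x hx y hy) (key y hy x hx)
end

section
/- If a subshift X has equal extension counts for a set C ⊆ G \ {e}, then X is avo for C: there exists a finite B ⊆ C such that F(x|C, e) = F(x|B, e) for all x ∈ X. -/
section Aux

variable {G A : Type*} [Group G]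

lemma followerSetAt_anti (X : Set (G → A)) {B C : Set G} (h : B ⊆ C) (x : G → A) :
    followerSetAt X C x ⊆ followerSetAt X B x := by
  rintro a ⟨w, hw, hag, h1⟩
  exact ⟨w, hw, fun g hg => hag g (h hg), h1⟩

lemma followerSetAt_congr (X : Set (G → A)) (D : Set G) {x y : G → A}
    (h : ∀ g ∈ D, x g = y g) : followerSetAt X D x = followerSetAt X D y := by
  ext a
  constructor <;> rintro ⟨w, hw, hag, h1⟩
  · exact ⟨w, hw, fun g hg => (hag g hg).trans (h g hg), h1⟩
  · exact ⟨w, hw, fun g hg => (hag g hg).trans (h g hg).symm, h1⟩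

lemma determined_isOpen {G A : Type*} [TopologicalSpace A] [DiscreteTopology A]
    (B : Finset G) (S : Set (G → A))
    (h : ∀ x y : G → A, (∀ g ∈ B, x g = y g) → x ∈ S → y ∈ S) : IsOpen S := by
  rw [isOpen_iff_forall_mem_open]
  intro x hx
  refine ⟨{y | ∀ g ∈ B, y g = x g},
    fun y hy => h x y (fun g hg => (hy g hg).symm) hx, ?_, fun g _ => rfl⟩
  have hrw : {y : G → A | ∀ g ∈ B, y g = x g}
      = ⋂ g ∈ (B : Set G), (fun y : G → A => y g) ⁻¹' {x g} := by
    ext y; simp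
  rw [hrw]
  exact B.finite_toSet.isOpen_biInter
    (fun g _ => (continuous_apply g).isOpen_preimage _ (isOpen_discrete _))

end Aux

/-- If a subshift `X` has equal extension counts for a set `C ⊆ G \ {e}`, then `X` is
avo for `C`: there exists a finite `B ⊆ C` such that `F(x|C, e) = F(x|B, e)` for all
`x ∈ X`. -/
theorem equal_extension_counts_implies_avo {G A : Type*} [Group G] [Finite A]
    [TopologicalSpace A] [DiscreteTopology A]
    (hfg : Group.FG G)
    (X : Set (G → A)) (hclosed : IsClosed X)
    (hshift : ∀ g : G, ∀ x ∈ X, (fun h => x (g⁻¹ * h)) ∈ X)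
    (C : Set G) (hC : (1 : G) ∉ C)
    (heec : ∀ x ∈ X, ∀ y ∈ X,
      (followerSetAt X C x).ncard = (followerSetAt X C y).ncard) :
    ∃ B : Set G, B ⊆ C ∧ B.Finite ∧
      ∀ x ∈ X, followerSetAt X C x = followerSetAt X B x := by
  classical
  rcases Set.eq_empty_or_nonempty X with hXe | ⟨x₀, hx₀⟩
  · exact ⟨∅, Set.empty_subset _, Set.finite_empty,
      fun x hx => by simp [hXe] at hx⟩
  haveI : CompactSpace A := Finite.compactSpace
  -- index type: finite subsets of C
  let ι := {B : Finset G // ↑B ⊆ C}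
  haveI : Nonempty ι := ⟨⟨∅, by simp⟩⟩
  let F : ι → (G → A) → Set A := fun i x => followerSetAt X ↑i.1 x
  have hfin : ∀ s : Set A, s.Finite := fun s => s.toFinite
  have hsubC : ∀ (i : ι) (x : G → A), followerSetAt X C x ⊆ F i x :=
    fun i x => followerSetAt_anti X i.2 x
  -- union in ι
  have hunion : ∀ i j : ι, ((i.1 ∪ j.1 : Finset G) : Set G) ⊆ C := by
    intro i j g hg
    rcases Finset.mem_union.mp hg with h | h
    · exact i.2 h
    · exact j.2 h
  have hFanti : ∀ i j : ι, (↑i.1 : Set G) ⊆ ↑j.1 → ∀ x, F j x ⊆ F i x :=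
    fun i j hij x => followerSetAt_anti X hij x
  -- pointwise: the follower set for C is attained at a finite stage
  have key : ∀ x ∈ X, ∃ i : ι, followerSetAt X C x = F i x := by
    intro x hx
    -- pick a stage of minimal cardinality
    obtain ⟨i₀, hi₀⟩ : ∃ i₀ : ι, ∀ i : ι, (F i₀ x).ncard ≤ (F i x).ncard := by
      have hne : (Set.range fun i : ι => (F i x).ncard).Nonempty := Set.range_nonempty _
      obtain ⟨i₀, hi₀⟩ := Nat.sInf_mem hne
      refine ⟨i₀, fun i => ?_⟩
      have h1 : (F i₀ x).ncard = sInf (Set.range fun i : ι => (F i x).ncard) := hi₀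
      rw [h1]
      exact Nat.sInf_le ⟨i, rfl⟩
    have hmono : ∀ i : ι, F i₀ x ⊆ F i x := by
      intro i
      set j : ι := ⟨i₀.1 ∪ i.1, hunion i₀ i⟩ with hj
      have h1 : F j x ⊆ F i₀ x := hFanti i₀ j (by simp [hj]) x
      have h2 : F j x ⊆ F i x := hFanti i j (by simp [hj]) x
      have heq : F j x = F i₀ x :=
        Set.eq_of_subset_of_ncard_le h1 (hi₀ j) (hfin _)
      rw [← heq]; exact h2
    refine ⟨i₀, Set.Subset.antisymm (hsubC i₀ x) ?_⟩
    intro a ha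
    have haall : ∀ i : ι, a ∈ F i x := fun i => hmono i ha
    -- compactness argument
    let K : ι → Set (G → A) := fun i => {w | w ∈ X ∧ (∀ g ∈ i.1, w g = x g) ∧ w 1 = a}
    have hKne : ∀ i, (K i).Nonempty := by
      intro i
      obtain ⟨w, hw, hag, h1⟩ := haall i
      exact ⟨w, hw, fun g hg => hag g hg, h1⟩
    have hKclosed : ∀ i, IsClosed (K i) := by
      intro i
      have h1 : IsClosed {w : G → A | ∀ g ∈ i.1, w g = x g} := by
        have hrw : {w : G → A | ∀ g ∈ i.1, w g = x g}
            = ⋂ g ∈ (i.1 : Set G), (fun w : G → A => w g) ⁻¹' {x g} := by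
          ext w; simp
        rw [hrw]
        exact isClosed_biInter
          (fun g _ => IsClosed.preimage (continuous_apply g) (isClosed_discrete _))
      have h2 : IsClosed {w : G → A | w 1 = a} :=
        isClosed_eq (continuous_apply 1) continuous_const
      exact hclosed.inter (h1.inter h2)
    have hKdir : Directed (· ⊇ ·) K := by
      intro i j
      refine ⟨⟨i.1 ∪ j.1, hunion i j⟩, ?_, ?_⟩
      · rintro w ⟨hw, hag, h1⟩
        exact ⟨hw, fun g hg => hag g (Finset.mem_union_left _ hg), h1⟩
      · rintro w ⟨hw, hag, h1⟩
        exact ⟨hw, fun g hg => hag g (Finset.mem_union_right _ hg), h1⟩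
    have hKcompact : ∀ i, IsCompact (K i) := fun i => (hKclosed i).isCompact
    obtain ⟨w, hw⟩ := IsCompact.nonempty_iInter_of_directed_nonempty_isCompact_isClosed
      K hKdir hKne hKcompact hKclosed
    have hw' : ∀ i : ι, w ∈ K i := Set.mem_iInter.mp hw
    obtain ⟨hwX, -, hw1⟩ := hw' ⟨∅, by simp⟩
    refine ⟨w, hwX, ?_, hw1⟩
    intro g hg
    obtain ⟨-, hag, -⟩ := hw' ⟨{g}, by simpa using hg⟩
    exact hag g (Finset.mem_singleton_self g)
  -- the common cardinality
  set n₀ := (followerSetAt X C x₀).ncard with hn₀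
  by_contra hcon
  push_neg at hcon
  have hbad : ∀ i : ι, ∃ x ∈ X, n₀ + 1 ≤ (F i x).ncard := by
    intro i
    obtain ⟨x, hx, hne⟩ := hcon ↑i.1 i.2 i.1.finite_toSet
    refine ⟨x, hx, ?_⟩
    have hss : followerSetAt X C x ⊂ F i x := ⟨hsubC i x, fun h => hne (le_antisymm (hsubC i x) h)⟩
    have hlt := Set.ncard_lt_ncard hss (hfin _)
    have hn : (followerSetAt X C x).ncard = n₀ := heec x hx x₀ hx₀
    omega
  let Y : ι → Set (G → A) := fun i => {x | x ∈ X ∧ n₀ + 1 ≤ (F i x).ncard}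
  have hYclosed : ∀ i, IsClosed (Y i) := by
    intro i
    have hZ : IsClosed {x : G → A | n₀ + 1 ≤ (F i x).ncard} := by
      rw [← compl_compl {x : G → A | n₀ + 1 ≤ (F i x).ncard}]
      refine IsOpen.isClosed_compl ?_
      refine determined_isOpen i.1 _ ?_
      intro x y hxy hx
      have : F i x = F i y := followerSetAt_congr X _ (fun g hg => hxy g hg)
      simpa [← this] using hx
    exact hclosed.inter hZ
  have hYne : ∀ i, (Y i).Nonempty := by
    intro i
    obtain ⟨x, hx, hcard⟩ := hbad i
    exact ⟨x, hx, hcard⟩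
  have hYdir : Directed (· ⊇ ·) Y := by
    intro i j
    refine ⟨⟨i.1 ∪ j.1, hunion i j⟩, ?_, ?_⟩
    · rintro x ⟨hx, hcard⟩
      refine ⟨hx, le_trans hcard (Set.ncard_le_ncard ?_ (hfin _))⟩
      exact hFanti i ⟨i.1 ∪ j.1, hunion i j⟩ (by simp) x
    · rintro x ⟨hx, hcard⟩
      refine ⟨hx, le_trans hcard (Set.ncard_le_ncard ?_ (hfin _))⟩
      exact hFanti j ⟨i.1 ∪ j.1, hunion i j⟩ (by simp) x
  obtain ⟨x, hx⟩ := IsCompact.nonempty_iInter_of_directed_nonempty_isCompact_isClosed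
    Y hYdir hYne (fun i => (hYclosed i).isCompact) hYclosed
  have hx' : ∀ i : ι, x ∈ Y i := Set.mem_iInter.mp hx
  obtain ⟨hxX, -⟩ := hx' ⟨∅, by simp⟩
  obtain ⟨i, hi⟩ := key x hxX
  have h1 : (followerSetAt X C x).ncard = n₀ := heec x hxX x₀ hx₀
  have h2 := (hx' i).2
  rw [← hi] at h2
  omega
end

section
/- A subshift X ⊆ Σ^ℤ is an avoshift for the set C = (-∞, -1] (i.e., there is a finite determining set for C) if and only if X is a subshift of finite type. -/
/-- A subshift `X ⊆ Σ^ℤ` is an avoshift for the set `C = (-∞, -1]` (i.e., there is a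
finite determining set `[-m, -1]` for `C`) if and only if `X` is a subshift of finite
type (definable by a finite window: there is `k` and a set of allowed words of length
`k+1`, equivalently a finite set of forbidden patterns, characterizing membership). -/
theorem avo_halfline_iff_SFT_int {A : Type*} [Finite A]
    [TopologicalSpace A] [DiscreteTopology A]
    (X : Set (ℤ → A)) (hclosed : IsClosed X)
    (hshift : ∀ n : ℤ, ∀ x ∈ X, (fun i => x (i + n)) ∈ X) :
    (∃ m : ℕ, ∀ x : ℤ → A, (∃ w ∈ X, ∀ i ≤ (-1 : ℤ), w i = x i) →
      ∀ a : A,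
        ((∃ w ∈ X, (∀ i : ℤ, -(m : ℤ) ≤ i → i ≤ -1 → w i = x i) ∧ w 0 = a) ↔
          (∃ w ∈ X, (∀ i ≤ (-1 : ℤ), w i = x i) ∧ w 0 = a))) ↔
    (∃ (k : ℕ) (W : Set (Fin (k + 1) → A)), ∀ x : ℤ → A,
      x ∈ X ↔ ∀ i : ℤ, (fun j : Fin (k + 1) => x (i + (j : ℤ))) ∈ W) := by
  constructor
  · -- avo ⇒ SFT
    rintro ⟨m, havo⟩
    refine ⟨m, {u | ∃ z ∈ X, ∀ j : Fin (m+1), z (j : ℤ) = u j}, fun x => ⟨?_, ?_⟩⟩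
    · intro hx i
      exact ⟨fun t => x (t + i), hshift i x hx, fun j => by simp [add_comm]⟩
    · intro hW
      -- windows of x, with integer indexing
      have hW' : ∀ i0 : ℤ, ∃ z ∈ X, ∀ i : ℤ, 0 ≤ i → i ≤ m → z i = x (i0 + i) := by
        intro i0
        obtain ⟨z, hzX, hz⟩ := hW i0
        refine ⟨z, hzX, ?_⟩
        intro i h0 h1
        lift i to ℕ using h0 with i'
        have : (i' : ℕ) < m + 1 := by exact_mod_cast Int.lt_add_one_of_le h1
        exact hz ⟨i', this⟩
      -- extension step along the half-line
      have step : ∀ (y : ℤ → A) (p : ℤ), (∃ w ∈ X, ∀ i ≤ p, w i = y i) →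
          (∃ z ∈ X, (∀ i : ℤ, -(m:ℤ) ≤ i → i ≤ -1 → z i = y (i + (p+1))) ∧ z 0 = y (p+1)) →
          ∃ w ∈ X, ∀ i ≤ p + 1, w i = y i := by
        rintro y p ⟨w, hwX, hw⟩ hloc
        have h1 : ∃ w' ∈ X, ∀ i ≤ (-1:ℤ), w' i = (fun i => y (i + (p+1))) i :=
          ⟨fun i => w (i + (p+1)), hshift (p+1) w hwX, fun i hi => hw _ (by omega)⟩
        obtain ⟨w'', hw''X, hagree, h0⟩ :=
          (havo (fun i => y (i + (p+1))) h1 (y (p+1))).mp hloc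
        refine ⟨fun i => w'' (i + -(p+1)), hshift (-(p+1)) w'' hw''X, ?_⟩
        intro i hi
        show w'' (i + -(p+1)) = y i
        rcases lt_or_eq_of_le hi with h | h
        · have h2 := hagree (i + -(p+1)) (by omega)
          rw [show i + -(p+1) + (p+1) = i from by ring] at h2
          exact h2
        · rw [show i + -(p+1) = 0 from by omega, h0, h]
      -- for each n there is a point of X agreeing with x on [-n, n]
      have key : ∀ n : ℕ, ∃ w ∈ X, ∀ i : ℤ, -(n:ℤ) ≤ i → i ≤ n → w i = x i := by
        intro n
        obtain ⟨z, hzX, hz⟩ := hW' (-(n:ℤ))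
        set y : ℤ → A := fun i => if i ≤ -(n:ℤ) + m then z (i + n) else x i with hy
        have hyx : ∀ i : ℤ, -(n:ℤ) ≤ i → y i = x i := by
          intro i hi
          by_cases h : i ≤ -(n:ℤ) + m
          · simp only [hy, if_pos h]
            rw [hz (i + n) (by omega) (by omega)]
            congr 1; ring
          · simp only [hy, if_neg h]
        have ind : ∀ t : ℕ, ∃ w ∈ X, ∀ i ≤ -(n:ℤ) + m + t, w i = y i := by
          intro t
          induction t with
          | zero =>
            refine ⟨fun i => z (i + n), hshift n z hzX, fun i hi => ?_⟩
            have hi' : i ≤ -(n:ℤ) + m := by exact_mod_cast by push_cast at hi ⊢; omega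
            simp only [hy, if_pos hi']
          | succ t ih =>
            have hih : ∃ w ∈ X, ∀ i ≤ -(n:ℤ) + m + t, w i = y i := ih
            set p : ℤ := -(n:ℤ) + m + t with hp
            obtain ⟨z', hz'X, hz'⟩ := hW' (p + 1 - m)
            have hloc : ∃ zz ∈ X, (∀ i : ℤ, -(m:ℤ) ≤ i → i ≤ -1 → zz i = y (i + (p+1))) ∧
                zz 0 = y (p+1) := by
              refine ⟨fun i => z' (i + m), hshift m z' hz'X, ?_, ?_⟩
              · intro i h0 h1
                show z' (i + (m:ℤ)) = y (i + (p+1))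
                rw [hz' (i + m) (by omega) (by omega), hyx (i + (p+1)) (by omega)]
                congr 1; ring
              · show z' (0 + (m:ℤ)) = y (p+1)
                rw [hz' (0 + m) (by omega) (by omega), hyx (p+1) (by omega)]
                congr 1; ring
            obtain ⟨w, hwX, hw⟩ := step y p hih hloc
            refine ⟨w, hwX, fun i hi => hw i ?_⟩
            push_cast at hi; omega
        obtain ⟨w, hwX, hw⟩ := ind (2*n)
        refine ⟨w, hwX, fun i h1 h2 => ?_⟩
        rw [hw i (by push_cast; omega), hyx i h1]
      -- conclude by closedness
      have hx : x ∈ closure X := by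
        rw [mem_closure_iff_nhds]
        intro t ht
        rw [nhds_pi, Filter.mem_pi] at ht
        obtain ⟨I, hIfin, s, hs, hsub⟩ := ht
        set n : ℕ := hIfin.toFinset.sup (fun i => i.natAbs) with hn
        obtain ⟨w, hwX, hw⟩ := key n
        refine ⟨w, hsub ?_, hwX⟩
        intro i hi
        have hle : i.natAbs ≤ n := Finset.le_sup (hIfin.mem_toFinset.mpr hi)
        rw [hw i (by omega) (by omega)]
        exact mem_of_mem_nhds (hs i)
      exact hclosed.closure_subset hx
  · -- SFT ⇒ avo
    rintro ⟨k, W, hSFT⟩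
    refine ⟨k, ?_⟩
    intro x hx a
    constructor
    · rintro ⟨w', hw'X, hagr, h0⟩
      obtain ⟨w, hwX, hw⟩ := hx
      set z : ℤ → A := fun i => if i ≤ -1 then x i else w' i with hzdef
      have hzX : z ∈ X := by
        rw [hSFT]
        intro i
        rcases le_or_gt i (-1 - k) with hik | hik
        · have he : (fun j : Fin (k+1) => z (i + j)) = fun j : Fin (k+1) => w (i + j) := by
            funext j
            have hj : (j : ℤ) ≤ k := by
              have := j.isLt; omega
            have h1 : i + j ≤ -1 := by omega
            simp only [hzdef, if_pos h1]
            exact (hw _ h1).symm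
          rw [he]
          exact (hSFT w).mp hwX i
        · have he : (fun j : Fin (k+1) => z (i + j)) = fun j : Fin (k+1) => w' (i + j) := by
            funext j
            have hj0 : (0:ℤ) ≤ (j : ℤ) := by positivity
            simp only [hzdef]
            by_cases h1 : i + j ≤ -1
            · rw [if_pos h1]
              exact (hagr _ (by omega) h1).symm
            · rw [if_neg h1]
          rw [he]
          exact (hSFT w').mp hw'X i
      refine ⟨z, hzX, fun i hi => ?_, ?_⟩
      · simp only [hzdef, if_pos hi]
      · simp only [hzdef, if_neg (by omega : ¬ (0:ℤ) ≤ -1), h0]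
    · rintro ⟨w', h1, h2, h3⟩
      exact ⟨w', h1, fun i _ hi => h2 i hi, h3⟩
end

section
/- A subshift X ⊆ Σ^G is avo for a set C ⊆ G \ {e} if and only if the projection map from X|(C ∪ {e}) to X|C (restriction of configurations) is an open map. -/
/-- `B` is a determining set for `C`. -/
def IsDetermining {G A : Type*} [Group G] (X : Set (G → A)) (C B : Set G) : Prop :=
  ∀ x : G → A, (∃ w ∈ X, ∀ g ∈ C, w g = x g) →
    ∀ a : A, (∃ w ∈ X, (∀ g ∈ B, w g = x g) ∧ w 1 = a) ↔
      (∃ w ∈ X, (∀ g ∈ C, w g = x g) ∧ w 1 = a)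

/-- Restriction of a configuration to a domain `D ⊆ G`. -/
def restrictTo {G A : Type*} (D : Set G) (x : G → A) : D → A := fun d => x d

open Classical in
lemma compact_open_finite_coords {ι A : Type*} [TopologicalSpace A] [DiscreteTopology A]
    (V K : Set (ι → A)) (hV : IsOpen V) (hKV : K ⊆ V) (hK : IsCompact K) :
    ∃ B : Set ι, B.Finite ∧ ∀ z ∈ K, ∀ z' : ι → A, (∀ i ∈ B, z' i = z i) → z' ∈ V := by
  have h := fun (z : K) => (isOpen_pi_iff.mp hV z.1 (hKV z.2))
  choose I u hu hsub using h
  set W : K → Set (ι → A) := fun z => Set.pi ↑(I z) (fun i => ({z.1 i} : Set A)) with hW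
  have hWopen : ∀ z : K, IsOpen (W z) := fun z =>
    isOpen_set_pi (Finset.finite_toSet _) (fun i _ => isOpen_discrete _)
  have hWsub : ∀ z : K, W z ⊆ V := by
    intro z
    refine subset_trans ?_ (hsub z)
    intro f hf i hi
    rw [hf i hi]
    exact (hu z i hi).2
  have hcover : K ⊆ ⋃ z : K, W z := by
    intro z hz
    exact Set.mem_iUnion.mpr ⟨⟨z, hz⟩, fun i _ => rfl⟩
  obtain ⟨T, hT⟩ := hK.elim_finite_subcover W hWopen hcover
  refine ⟨⋃ z ∈ T, ↑(I z), T.finite_toSet.biUnion (fun z _ => (I z).finite_toSet), ?_⟩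
  intro z hz z' hz'
  obtain ⟨z0, hz0T, hz0⟩ := Set.mem_iUnion₂.mp (hT hz)
  refine hWsub z0 ?_
  intro i hi
  have hiB : i ∈ ⋃ z ∈ T, (↑(I z) : Set ι) := Set.mem_iUnion₂.mpr ⟨z0, hz0T, hi⟩
  rw [hz' i hiB]
  exact hz0 i hi

/-- A subshift `X` is avo for `C ⊆ G \ {e}` if and only if the projection map
`X|(C ∪ {e}) → X|C` (restriction of configurations) is an open map. -/
theorem avo_iff_projection_isOpenMap {G A : Type*} [Group G] [Countable G] [Finite A]
    [TopologicalSpace A] [DiscreteTopology A]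
    (X : Set (G → A)) (hclosed : IsClosed X)
    (hshift : ∀ g : G, ∀ x ∈ X, (fun h => x (g⁻¹ * h)) ∈ X)
    (C : Set G) (hC : (1 : G) ∉ C) :
    (∃ B : Set G, B ⊆ C ∧ B.Finite ∧ IsDetermining X C B) ↔
    IsOpenMap (fun y : (restrictTo (C ∪ {1}) '' X : Set ((C ∪ {1} : Set G) → A)) =>
      (⟨fun c : C => y.1 ⟨c.1, Set.mem_union_left _ c.2⟩, by
        obtain ⟨x, hxX, hx⟩ := y.2
        exact ⟨x, hxX, by funext c; simp [restrictTo, ← hx]⟩⟩ :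
        (restrictTo C '' X : Set (C → A)))) := by
  classical
  set D : Set G := C ∪ {1} with hD
  have h1D : (1 : G) ∈ D := Set.mem_union_right _ rfl
  set Y : Set (↥D → A) := restrictTo D '' X with hY
  set Z : Set (↥C → A) := restrictTo C '' X with hZ
  set π : Y → Z := fun y =>
      (⟨fun c : C => y.1 ⟨c.1, Set.mem_union_left _ c.2⟩, by
        obtain ⟨x, hxX, hx⟩ := y.2
        exact ⟨x, hxX, by funext c; simp [restrictTo, ← hx]⟩⟩ :
        (restrictTo C '' X : Set (C → A))) with hπ
  constructor
  · -- determining set ⇒ open map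
    rintro ⟨B, hBC, hBfin, hBdet⟩
    intro U hU
    rw [isOpen_induced_iff] at hU
    obtain ⟨V, hVopen, hVU⟩ := hU
    rw [isOpen_iff_forall_mem_open]
    rintro z0 ⟨y, hyU, hyz0⟩
    have hyV : (y : ↥D → A) ∈ V := by rw [← hVU] at hyU; exact hyU
    obtain ⟨I, u, hu, hsub⟩ := isOpen_pi_iff.mp hVopen y.1 hyV
    -- finite coordinate set in C
    set Fc : Set ↥C :=
      {c : ↥C | (⟨c.1, Set.mem_union_left _ c.2⟩ : ↥D) ∈ I ∨ c.1 ∈ B}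
      with hFc
    have hFcfin : Fc.Finite := by
      have h1 : Fc ⊆ ((fun c : ↥C =>
          (⟨c.1, Set.mem_union_left _ c.2⟩ : ↥D)) ⁻¹' ↑I) ∪ (Subtype.val ⁻¹' B) := by
        intro c hc; exact hc
      refine Set.Finite.subset (Set.Finite.union ?_ ?_) h1
      · refine Set.Finite.preimage ?_ I.finite_toSet
        intro c₁ _ c₂ _ h
        exact Subtype.ext (by simpa using congrArg Subtype.val h)
      · exact Set.Finite.preimage (Set.injOn_of_injective Subtype.val_injective) hBfin
    refine ⟨{z : Z | ∀ c ∈ Fc, z.1 c = z0.1 c}, ?_, ?_, ?_⟩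
    · -- ⊆ π '' U
      rintro ⟨z', hz'Z⟩ hz'
      obtain ⟨x', hx'X, hx'⟩ := hz'Z
      obtain ⟨w0, hw0X, hw0⟩ := y.2
      set a : A := y.1 ⟨1, h1D⟩ with ha
      have hdet := hBdet x' ⟨x', hx'X, fun g _ => rfl⟩ a
      have hex : ∃ w ∈ X, (∀ g ∈ B, w g = x' g) ∧ w 1 = a := by
        refine ⟨w0, hw0X, ?_, ?_⟩
        · intro g hg
          have hgC : g ∈ C := hBC hg
          have h1 : w0 g = y.1 ⟨g, Set.mem_union_left _ hgC⟩ := by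
            rw [← hw0] <;> rfl
          have h2 : z' ⟨g, hgC⟩ = z0.1 ⟨g, hgC⟩ := hz' ⟨g, hgC⟩ (Or.inr hg)
          have h3 : z0.1 ⟨g, hgC⟩ = y.1 ⟨g, Set.mem_union_left _ hgC⟩ := by
            rw [← hyz0] <;> rfl
          have h4 : z' ⟨g, hgC⟩ = x' g := by rw [← hx'] <;> rfl
          rw [h1, ← h3, ← h2, h4]
        · rw [ha, ← hw0] <;> rfl
      obtain ⟨w', hw'X, hw'C, hw'1⟩ := hdet.mp hex
      set y' : Y := ⟨restrictTo D w', ⟨w', hw'X, rfl⟩⟩ with hy'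
      have hy'U : y' ∈ U := by
        rw [← hVU]
        refine hsub ?_
        intro i hi
        have : y'.1 i = y.1 i := by
          rcases i.2 with hiC | hi1
          · have h5 : y'.1 i = x' i.1 := hw'C i.1 hiC
            have h6 : z' ⟨i.1, hiC⟩ = x' i.1 := by rw [← hx'] <;> rfl
            have h7 : z' ⟨i.1, hiC⟩ = z0.1 ⟨i.1, hiC⟩ := hz' ⟨i.1, hiC⟩ (by
              left
              have : (⟨i.1, Set.mem_union_left _ hiC⟩ : ↥D) = i := Subtype.ext rfl
              rw [this]; exact hi)
            have h8 : z0.1 ⟨i.1, hiC⟩ = y.1 ⟨i.1, Set.mem_union_left _ hiC⟩ := by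
              rw [← hyz0] <;> rfl
            have h9 : (⟨i.1, Set.mem_union_left _ hiC⟩ : ↥D) = i := Subtype.ext rfl
            rw [h5, ← h6, h7, h8, h9]
          · have hi1' : i = (⟨1, h1D⟩ : ↥D) := Subtype.ext hi1
            rw [hi1']
            exact hw'1
        rw [this]
        exact (hu i hi).2
      refine ⟨y', hy'U, ?_⟩
      apply Subtype.ext
      funext c
      show y'.1 ⟨c.1, Set.mem_union_left _ c.2⟩ = z' c
      have h10 : y'.1 ⟨c.1, Set.mem_union_left _ c.2⟩ = x' c.1 := hw'C c.1 c.2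
      have h11 : z' c = x' c.1 := by rw [← hx'] <;> rfl
      rw [h10, h11]
    · -- open
      have : {z : Z | ∀ c ∈ Fc, z.1 c = z0.1 c}
          = Subtype.val ⁻¹' (Set.pi Fc (fun c => ({z0.1 c} : Set A))) := by
        ext z; simp [Set.mem_pi]
      rw [this]
      exact (isOpen_set_pi hFcfin (fun i _ => isOpen_discrete _)).preimage
        continuous_subtype_val
    · -- z0 ∈
      intro c _; rfl
  · -- open map ⇒ determining set
    intro hopen
    -- compactness setup
    have hXcomp : IsCompact X := hclosed.isCompact
    have hcont : Continuous (restrictTo D (A := A)) :=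
      continuous_pi (fun d => continuous_apply (d : G))
    have hYcomp : IsCompact Y := hXcomp.image hcont
    have : CompactSpace Y := isCompact_iff_compactSpace.mp hYcomp
    have hπcont : Continuous π := by
      refine Continuous.subtype_mk ?_ _
      exact continuous_pi (fun c => (continuous_apply _).comp continuous_subtype_val)
    -- for each a, the clopen fiber set
    have key : ∀ a : A, ∃ Ba : Set ↥C, Ba.Finite ∧
        ∀ z ∈ Subtype.val '' (π '' {y : Y | y.1 ⟨1, h1D⟩ = a}),
          ∀ z' ∈ Z, (∀ i ∈ Ba, z' i = z i) →
            z' ∈ Subtype.val '' (π '' {y : Y | y.1 ⟨1, h1D⟩ = a}) := by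
      intro a
      set Ua : Set Y := {y : Y | y.1 ⟨1, h1D⟩ = a} with hUa
      have hc1 : Continuous (fun y : ↥Y => y.1 ⟨1, h1D⟩) :=
        (continuous_apply _).comp continuous_subtype_val
      have he : Ua = (fun y : ↥Y => y.1 ⟨1, h1D⟩) ⁻¹' {a} := by
        ext y; simp [hUa]
      have hUaopen : IsOpen Ua := by
        rw [he]; exact (isOpen_discrete _).preimage hc1
      have hUaclosed : IsClosed Ua := by
        rw [he]; exact (isClosed_discrete _).preimage hc1
      have hUacomp : IsCompact Ua := hUaclosed.isCompact
      have hKcomp : IsCompact (Subtype.val '' (π '' Ua)) :=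
        ((hUacomp.image hπcont).image continuous_subtype_val)
      obtain ⟨V, hVopen, hVeq⟩ := isOpen_induced_iff.mp (hopen Ua hUaopen)
      have hKV : Subtype.val '' (π '' Ua) ⊆ V := by
        rintro _ ⟨p, hp, rfl⟩
        rw [← hVeq] at hp
        exact hp
      obtain ⟨Ba, hBafin, hBa⟩ := compact_open_finite_coords V _ hVopen hKV hKcomp
      refine ⟨Ba, hBafin, ?_⟩
      intro z hz z' hz'Z hagree
      have hz'V : z' ∈ V := hBa z hz z' hagree
      have : (⟨z', hz'Z⟩ : Z) ∈ π '' Ua := by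
        rw [← hVeq]; exact hz'V
      exact ⟨⟨z', hz'Z⟩, this, rfl⟩
    choose Ba hBafin hBa using key
    refine ⟨⋃ a : A, Subtype.val '' Ba a, ?_, ?_, ?_⟩
    · rintro g hg
      obtain ⟨a, hga⟩ := Set.mem_iUnion.mp hg
      obtain ⟨c, _, rfl⟩ := hga
      exact c.2
    · exact Set.finite_iUnion (fun a => (hBafin a).image _)
    · intro x hx a
      constructor
      · rintro ⟨w, hwX, hwB, hw1⟩
        obtain ⟨w0, hw0X, hw0⟩ := hx
        set yD : Y := ⟨restrictTo D w, ⟨w, hwX, rfl⟩⟩ with hyD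
        have hyDU : yD ∈ {y : Y | y.1 ⟨1, h1D⟩ = a} := hw1
        have hzK : (fun c : ↥C => w c.1) ∈
            Subtype.val '' (π '' {y : Y | y.1 ⟨1, h1D⟩ = a}) := by
          refine ⟨π yD, ⟨yD, hyDU, rfl⟩, ?_⟩
          rfl
        have hz'Z : restrictTo C w0 ∈ Z := ⟨w0, hw0X, rfl⟩
        have hagree : ∀ i ∈ Ba a, restrictTo C w0 i = (fun c : ↥C => w c.1) i := by
          intro i hi
          have hiB : i.1 ∈ ⋃ a : A, Subtype.val '' Ba a :=
            Set.mem_iUnion.mpr ⟨a, ⟨i, hi, rfl⟩⟩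
          have h1 : w i.1 = x i.1 := hwB i.1 hiB
          have h2 : w0 i.1 = x i.1 := hw0 i.1 i.2
          show w0 i.1 = w i.1
          rw [h1, h2]
        obtain ⟨p, ⟨y, hyUa, rfl⟩, hpval⟩ := hBa a _ hzK _ hz'Z hagree
        obtain ⟨w', hw'X, hw'⟩ := y.2
        refine ⟨w', hw'X, ?_, ?_⟩
        · intro g hg
          have h1 : w' g = y.1 ⟨g, Set.mem_union_left _ hg⟩ := by rw [← hw'] <;> rfl
          have h2 : (π y).1 ⟨g, hg⟩ = y.1 ⟨g, Set.mem_union_left _ hg⟩ := rfl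
          have h3 : (π y).1 ⟨g, hg⟩ = restrictTo C w0 ⟨g, hg⟩ := by rw [hpval]
          have h4 : restrictTo C w0 ⟨g, hg⟩ = w0 g := rfl
          rw [h1, ← h2, h3, h4, hw0 g hg]
        · have h1 : w' 1 = y.1 ⟨1, h1D⟩ := by rw [← hw'] <;> rfl
          rw [h1]; exact hyUa
      · rintro ⟨w, hwX, hwC, hw1⟩
        refine ⟨w, hwX, ?_, hw1⟩
        intro g hg
        obtain ⟨a', hga'⟩ := Set.mem_iUnion.mp hg
        obtain ⟨c, _, rfl⟩ := hga'
        exact hwC c.1 c.2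
end

section
/- A subshift X ⊆ Σ^G has topological strong spatial mixing (with some gap n) if and only if X is uniformly avo for the family of all subsets of G \ {e} (with some common avoradius). -/
open scoped Pointwise

/-- Topological strong spatial mixing with gap `n` (word metric given by the ball
`S ^ k`): for all pairwise disjoint finite `U, V, W ⊆ G` with `d(U, V) ≥ n`, if the
patterns `u ⊔ s` (on `U ∪ W`) and `s ⊔ v` (on `W ∪ V`) of a configuration are globally
valid then so is `u ⊔ s ⊔ v` (on `U ∪ W ∪ V`). -/
def TSSM {G A : Type*} [Group G] (X : Set (G → A)) (S : Set G) (n : ℕ) : Prop :=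
  ∀ U V W : Set G, U.Finite → V.Finite → W.Finite →
    Disjoint U V → Disjoint U W → Disjoint V W →
    (∀ u ∈ U, ∀ v ∈ V, ∀ k : ℕ, k < n → u⁻¹ * v ∉ S ^ k) →
    ∀ w : G → A, (∃ p ∈ X, ∀ g ∈ U ∪ W, p g = w g) →
      (∃ p ∈ X, ∀ g ∈ W ∪ V, p g = w g) →
      ∃ p ∈ X, ∀ g ∈ U ∪ W ∪ V, p g = w g

/-!
TSSM with gap `n` gives avoradius `n`: for a finite piece `T` of `C`, apply TSSM with
`V = {e}`, `S = T ∩ B_n` and `U = T \ B_n`; compactness of `X` passes from the finite pieces to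
`C`. Conversely, avoradius `n` gives TSSM with gap `n + 1`: extend `u ⊔ s` to `V` one point `v`
at a time. Near `v` (within distance `n`) the current domain meets only `S` and earlier points of
`V`, where it agrees with the valid pattern `s ⊔ v`; so avo, applied after translating `v` to `e`,
allows the value at `v` to be added.
-/

def IsGloballyValidOn {ι A : Type*} (X : Set (ι → A)) (w : ι → A) (D : Set ι) : Prop :=
  ∃ p ∈ X, Set.EqOn p w D

namespace IsGloballyValidOn

variable {ι A : Type*} {X : Set (ι → A)} {w w' : ι → A} {D D' : Set ι}

theorem mono (h : IsGloballyValidOn X w D') (hD : D ⊆ D') : IsGloballyValidOn X w D :=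
  let ⟨p, hpX, hp⟩ := h
  ⟨p, hpX, hp.mono hD⟩

theorem congr (h : IsGloballyValidOn X w D) (hw : Set.EqOn w w' D) :
    IsGloballyValidOn X w' D :=
  let ⟨p, hpX, hp⟩ := h
  ⟨p, hpX, hp.trans hw⟩

theorem of_forall_finite [TopologicalSpace A] [CompactSpace A] [T1Space A] (hX : IsClosed X)
    (h : ∀ F ⊆ D, F.Finite → IsGloballyValidOn X w F) : IsGloballyValidOn X w D := by
  obtain ⟨p, hpX, hp⟩ := hX.isCompact.inter_iInter_nonempty
    (fun g : D => {p : ι → A | p g = w g})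
    (fun g => isClosed_singleton.preimage (continuous_apply (g : ι)))
    (fun F => by
      obtain ⟨p, hpX, hp⟩ := h (Subtype.val '' (F : Set D)) (by simp) (F.finite_toSet.image _)
      exact ⟨p, hpX, Set.mem_iInter₂.2 fun g hg => hp ⟨g, hg, rfl⟩⟩)
  exact ⟨p, hpX, fun g hg => Set.mem_iInter.1 hp ⟨g, hg⟩⟩

end IsGloballyValidOn

section Subshift

variable {G A : Type*} [Group G] {X : Set (G → A)}

theorem isGloballyValidOn_preimage_mul_left_iff
    (hshift : ∀ g : G, ∀ x ∈ X, (fun h => x (g⁻¹ * h)) ∈ X) (v : G) (w : G → A) (D : Set G) :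
    IsGloballyValidOn X (fun h => w (v * h)) ((v * ·) ⁻¹' D) ↔ IsGloballyValidOn X w D := by
  constructor
  · rintro ⟨p, hpX, hp⟩
    refine ⟨fun h => p (v⁻¹ * h), hshift v p hpX, fun g hg => ?_⟩
    simpa using hp (show v * (v⁻¹ * g) ∈ D by simpa using hg)
  · rintro ⟨p, hpX, hp⟩
    exact ⟨fun h => p (v * h), by simpa using hshift v⁻¹ p hpX, fun g hg => hp hg⟩

open Classical in
theorem exists_eqOn_and_apply_one_iff {B : Set G} (h1B : (1 : G) ∉ B) (x : G → A) (a : A) :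
    (∃ w ∈ X, (∀ g ∈ B, w g = x g) ∧ w 1 = a) ↔
      IsGloballyValidOn X (Function.update x 1 a) (insert 1 B) := by
  refine exists_congr fun w => and_congr_right fun _ => ?_
  simp only [Set.EqOn, Set.forall_mem_insert, Function.update_self, and_comm (a := w 1 = a)]
  refine and_congr_left fun _ => forall₂_congr fun g hg => ?_
  rw [Function.update_of_ne (ne_of_mem_of_not_mem hg h1B)]

theorem IsDetermining.isGloballyValidOn_insert_one {C B : Set G} {x : G → A}
    (h : IsDetermining X C B) (hC : IsGloballyValidOn X x C)
    (hB : IsGloballyValidOn X x (insert 1 B)) : IsGloballyValidOn X x (insert 1 C) := by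
  obtain ⟨p, hpX, hp⟩ := hB
  obtain ⟨z, hzX, hzC, hz1⟩ := (h x hC (x 1)).1 ⟨p, hpX, fun g hg => hp (.inr hg), hp (.inl rfl)⟩
  exact ⟨z, hzX, Set.forall_mem_insert.2 ⟨hz1, hzC⟩⟩

theorem inv_mem_pow_iff_of_inv_eq {S : Set G} (hSinv : S⁻¹ = S) {g : G} {k : ℕ} :
    g⁻¹ ∈ S ^ k ↔ g ∈ S ^ k := by
  rw [← Set.mem_inv, ← inv_pow, hSinv]

variable {S : Set G} {n : ℕ}

theorem TSSM.isGloballyValidOn_insert_one (h : TSSM X S n) (hS1 : (1 : G) ∈ S)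
    (hSinv : S⁻¹ = S) {T : Set G} (hT : T.Finite) (h1T : (1 : G) ∉ T) {y : G → A}
    (hTy : IsGloballyValidOn X y T) (hBy : IsGloballyValidOn X y (insert 1 (T ∩ S ^ n))) :
    IsGloballyValidOn X y (insert 1 T) := by
  have hsep : ∀ u ∈ T \ S ^ n, ∀ v ∈ ({1} : Set G), ∀ k < n, u⁻¹ * v ∉ S ^ k := by
    rintro u ⟨-, hu⟩ v rfl k hk huv
    rw [mul_one, inv_mem_pow_iff_of_inv_eq hSinv] at huv
    exact hu (Set.pow_subset_pow_right hS1 hk.le huv)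
  have := h (T \ S ^ n) {1} (T ∩ S ^ n) hT.sdiff (Set.finite_singleton 1) (hT.inter_of_left _)
    (Set.disjoint_singleton_right.2 fun h => h1T h.1) Set.disjoint_sdiff_inter
    (Set.disjoint_singleton_left.2 fun h => h1T h.1)
    hsep y (by rwa [Set.sdiff_union_inter]) (by rwa [Set.union_singleton])
  rwa [Set.sdiff_union_inter, Set.union_singleton] at this

open Classical in
theorem TSSM.isDetermining [TopologicalSpace A] [CompactSpace A] [T1Space A]
    (h : TSSM X S n) (hS1 : (1 : G) ∈ S) (hSinv : S⁻¹ = S) (hX : IsClosed X) {C : Set G}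
    (h1C : (1 : G) ∉ C) : IsDetermining X C (C ∩ S ^ n) := by
  intro x hx a
  refine ⟨fun hB => ?_, fun ⟨w, hwX, hwC, hw1⟩ => ⟨w, hwX, fun g hg => hwC g hg.1, hw1⟩⟩
  rw [exists_eqOn_and_apply_one_iff h1C]
  rw [exists_eqOn_and_apply_one_iff fun h => h1C h.1] at hB
  have hCy : IsGloballyValidOn X (Function.update x 1 a) C := IsGloballyValidOn.congr hx
    fun g hg => (Function.update_of_ne (ne_of_mem_of_not_mem hg h1C) _ _).symm
  refine IsGloballyValidOn.of_forall_finite hX fun F hF hFfin => ?_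
  refine (h.isGloballyValidOn_insert_one hS1 hSinv (hFfin.inter_of_left C) (fun h => h1C h.2)
    (hCy.mono Set.inter_subset_right) (hB.mono ?_)).mono ?_
  · exact Set.insert_subset_insert (Set.inter_subset_inter_left _ Set.inter_subset_right)
  · exact fun g hg => (hF hg).imp id fun hgC => ⟨hg, hgC⟩

theorem isGloballyValidOn_insert_of_isDetermining
    (hshift : ∀ g : G, ∀ x ∈ X, (fun h => x (g⁻¹ * h)) ∈ X) {B D : Set G} {v : G} {w : G → A}
    (hdet : ∀ C : Set G, (1 : G) ∉ C → IsDetermining X C (C ∩ B)) (hvD : v ∉ D)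
    (hD : IsGloballyValidOn X w D) (hB : IsGloballyValidOn X w (insert v {g ∈ D | v⁻¹ * g ∈ B})) :
    IsGloballyValidOn X w (insert v D) := by
  have hpre : ∀ E : Set G, (v * ·) ⁻¹' insert v E = insert 1 ((v * ·) ⁻¹' E) := fun E => by
    ext; simp
  rw [← isGloballyValidOn_preimage_mul_left_iff hshift v, hpre] at hB ⊢
  refine (hdet _ (by simpa using hvD)).isGloballyValidOn_insert_one
    ((isGloballyValidOn_preimage_mul_left_iff hshift v w D).2 hD) (hB.mono ?_)
  exact Set.insert_subset_insert fun g hg => ⟨hg.1, by simpa using hg.2⟩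

theorem tssm_succ_of_isDetermining (hshift : ∀ g : G, ∀ x ∈ X, (fun h => x (g⁻¹ * h)) ∈ X)
    (hSinv : S⁻¹ = S) (hdet : ∀ C : Set G, (1 : G) ∉ C → IsDetermining X C (C ∩ S ^ n)) :
    TSSM X S (n + 1) := by
  rintro U V W - hV - hUV - hVW hsep w (hleft : IsGloballyValidOn X w (U ∪ W))
    (hright : IsGloballyValidOn X w (W ∪ V))
  change IsGloballyValidOn X w (U ∪ W ∪ V)
  refine hV.induction_on_subset (motive := fun F _ => IsGloballyValidOn X w (U ∪ W ∪ F)) V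
    (by rwa [Set.union_empty]) fun {v F} hvV hFV hvF ih => ?_
  rw [Set.union_insert]
  refine isGloballyValidOn_insert_of_isDetermining hshift hdet ?_ ih (hright.mono ?_)
  · rintro ((hvU | hvW) | hvF')
    exacts [hUV.notMem_of_mem_left hvU hvV, hVW.notMem_of_mem_left hvV hvW, hvF hvF']
  · rintro g (rfl | ⟨(hgU | hgW) | hgF, hg⟩)
    · exact .inr hvV
    · refine absurd ?_ (hsep g hgU v hvV n n.lt_succ_self)
      rwa [← inv_mem_pow_iff_of_inv_eq hSinv, mul_inv_rev, inv_inv]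
    · exact .inl hgW
    · exact .inr (hFV hgF)

end Subshift

theorem tssm_iff_uniformly_avo_general {G A : Type*} [Group G] [Finite A]
    [TopologicalSpace A] [DiscreteTopology A]
    (S : Set G) (hS1 : (1 : G) ∈ S) (hSinv : S⁻¹ = S)
    (X : Set (G → A)) (hclosed : IsClosed X)
    (hshift : ∀ g : G, ∀ x ∈ X, (fun h => x (g⁻¹ * h)) ∈ X) :
    (∃ n : ℕ, TSSM X S n) ↔
    (∃ n : ℕ, ∀ C : Set G, (1 : G) ∉ C → IsDetermining X C (C ∩ S ^ n)) :=
  ⟨fun ⟨n, h⟩ => ⟨n, fun _ h1C => h.isDetermining hS1 hSinv hclosed h1C⟩,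
    fun ⟨n, h⟩ => ⟨n + 1, tssm_succ_of_isDetermining hshift hSinv h⟩⟩

/-- A subshift has topological strong spatial mixing (with some gap `n`) if and only if
it is uniformly avo for the family of all subsets of `G \ {e}` (with some common
avoradius). -/
theorem tssm_iff_uniformly_avo {G A : Type*} [Group G] [Finite A]
    [TopologicalSpace A] [DiscreteTopology A]
    (S : Set G) (hS1 : (1 : G) ∈ S) (hSinv : S⁻¹ = S) (hSfin : S.Finite)
    (hSgen : ∀ g : G, ∃ n : ℕ, g ∈ S ^ n)
    (X : Set (G → A)) (hclosed : IsClosed X)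
    (hshift : ∀ g : G, ∀ x ∈ X, (fun h => x (g⁻¹ * h)) ∈ X) :
    (∃ n : ℕ, TSSM X S n) ↔
    (∃ n : ℕ, ∀ C : Set G, (1 : G) ∉ C → IsDetermining X C (C ∩ S ^ n)) :=
  tssm_iff_uniformly_avo_general S hS1 hSinv X hclosed hshift
end

section
/- A subshift X ⊆ Σ^G is avo for the family of all cofinite subsets of G \ {e} if and only if X has the topological Markov property. -/
/-- Single-site splicing lemma: from the avo property we can resample the value at a
single site `g`, keeping everything outside `F ∪ {g}` fixed. -/
lemma splice_single {G A : Type*} [Group G]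
    (X : Set (G → A))
    (hshift : ∀ g : G, ∀ x ∈ X, (fun h => x (g⁻¹ * h)) ∈ X)
    (havo : ∀ D : Set G, (1 : G) ∉ D → Dᶜ.Finite →
      ∃ B : Set G, B ⊆ D ∧ B.Finite ∧ IsDetermining X D B)
    (g : G) (F : Set G) (hF : F.Finite) :
    ∃ W : Set G, W.Finite ∧ (∀ b ∈ W, b ∉ F ∧ b ≠ g) ∧
      ∀ x ∈ X, ∀ y ∈ X, (∀ b ∈ W, x b = y b) →
        ∃ w ∈ X, w g = x g ∧ ∀ h : G, h ∉ F → h ≠ g → w h = y h := by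
  have hDfin : ({h : G | g * h ∉ F ∧ h ≠ 1} : Set G)ᶜ.Finite := by
    have hsub : ({h : G | g * h ∉ F ∧ h ≠ 1} : Set G)ᶜ ⊆ (fun f => g⁻¹ * f) '' F ∪ {1} := by
      intro h hh
      simp only [Set.mem_compl_iff, Set.mem_setOf_eq, not_and_or, not_not, ne_eq] at hh
      rcases hh with h1 | h1
      · exact Or.inl ⟨g * h, h1, by group⟩
      · exact Or.inr (by simp [h1])
    exact ((hF.image _).union (Set.finite_singleton _)).subset hsub
  obtain ⟨B₀, hB₀D, hB₀fin, hdet⟩ := havo {h : G | g * h ∉ F ∧ h ≠ 1} (by simp) hDfin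
  refine ⟨(fun b => g * b) '' B₀, hB₀fin.image _, ?_, ?_⟩
  · rintro b ⟨c, hc, rfl⟩
    obtain ⟨h1, h2⟩ := hB₀D hc
    exact ⟨h1, by simpa using h2⟩
  · intro x hx y hy hxy
    have hx' : (fun h => x (g * h)) ∈ X := by
      have := hshift g⁻¹ x hx
      simpa using this
    have hy' : (fun h => y (g * h)) ∈ X := by
      have := hshift g⁻¹ y hy
      simpa using this
    have key := (hdet (fun h => y (g * h)) ⟨_, hy', fun _ _ => rfl⟩ (x g)).mp
      ⟨fun h => x (g * h), hx', fun b hb => hxy _ ⟨b, hb, rfl⟩, by simp⟩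
    obtain ⟨w', hw'X, hw'D, hw'1⟩ := key
    refine ⟨fun h => w' (g⁻¹ * h), hshift g w' hw'X, by simpa using hw'1, ?_⟩
    intro h h1 h2
    have hmem : g⁻¹ * h ∈ {h : G | g * h ∉ F ∧ h ≠ 1} := by
      constructor
      · simpa [mul_inv_cancel_left] using h1
      · intro hc
        apply h2
        have : g * (g⁻¹ * h) = g * 1 := by rw [hc]
        simpa [mul_inv_cancel_left] using this
    have := hw'D _ hmem
    simpa [mul_inv_cancel_left] using this

/-- A subshift `X ⊆ A^G` is avo for the family of all cofinite subsets of `G \ {e}`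
if and only if `X` has the topological Markov property: for every finite `B ⊆ G` there
is a finite `C ⊇ B` such that whenever `x, y ∈ X` agree on `C \ B`, the point `z` with
`z|C = x|C` and `z|(G \ B) = y|(G \ B)` lies in `X`. -/
theorem avo_cofinite_iff_TMP {G A : Type*} [Group G] [Countable G] [Finite A]
    [TopologicalSpace A] [DiscreteTopology A]
    (X : Set (G → A)) (hclosed : IsClosed X)
    (hshift : ∀ g : G, ∀ x ∈ X, (fun h => x (g⁻¹ * h)) ∈ X) :
    (∀ D : Set G, (1 : G) ∉ D → Dᶜ.Finite →
      ∃ B : Set G, B ⊆ D ∧ B.Finite ∧ IsDetermining X D B) ↔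
    (∀ B : Set G, B.Finite → ∃ C : Set G, B ⊆ C ∧ C.Finite ∧
      ∀ x ∈ X, ∀ y ∈ X, (∀ g ∈ C \ B, x g = y g) →
        ∃ z ∈ X, (∀ g ∈ C, z g = x g) ∧ ∀ g ∉ B, z g = y g) := by
  constructor
  · intro havo B hB
    classical
    lift B to Finset G using hB
    induction B using Finset.induction_on with
    | empty =>
      exact ⟨∅, by simp, Set.finite_empty,
        fun x _ y hy _ => ⟨y, hy, by simp, fun _ _ => rfl⟩⟩
    | @insert a F ha IH =>
      rw [Finset.coe_insert]
      obtain ⟨CF, hFC, hCFfin, hC⟩ := IH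
      obtain ⟨W, hWfin, hWdisj, hW⟩ := splice_single X hshift havo a (↑F : Set G)
        (F.finite_toSet)
      refine ⟨CF ∪ W ∪ insert a (↑F : Set G), fun b hb => Or.inr hb,
        (hCFfin.union hWfin).union (F.finite_toSet.insert a), ?_⟩
      intro x hx y hy hxy
      have hxyW : ∀ b ∈ W, x b = y b := by
        intro b hb
        obtain ⟨hbF, hba⟩ := hWdisj b hb
        exact hxy b ⟨Or.inl (Or.inr hb), by simp [hbF, hba]⟩
      obtain ⟨w, hwX, hwa, hwrest⟩ := hW x hx y hy hxyW
      have hxw : ∀ b ∈ CF \ F, x b = w b := by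
        intro b hb
        by_cases hba : b = a
        · subst hba; exact hwa.symm
        · rw [hwrest b hb.2 hba]
          exact hxy b ⟨Or.inl (Or.inl hb.1), by simp [hb.2, hba]⟩
      obtain ⟨z, hzX, hzC, hzout⟩ := hC x hx w hwX hxw
      refine ⟨z, hzX, ?_, ?_⟩
      · intro b hb
        rcases hb with hb | hb
        · rcases hb with hb | hb
          · exact hzC b hb
          · obtain ⟨hbF, hba⟩ := hWdisj b hb
            rw [hzout b hbF, hwrest b hbF hba]
            exact (hxyW b hb).symm
        · rcases hb with hb | hb
          · subst hb
            rw [hzout b (by simpa using ha)]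
            exact hwa
          · exact hzC b (hFC hb)
      · intro b hb
        simp only [Set.mem_insert_iff, not_or] at hb
        rw [hzout b hb.2, hwrest b hb.2 hb.1]
  · intro htmp D h1 hD
    obtain ⟨C, hBC, hCfin, hTMP⟩ := htmp Dᶜ hD
    refine ⟨C \ Dᶜ, fun b hb => by simpa using hb.2, hCfin.subset Set.diff_subset, ?_⟩
    intro x hxw a
    obtain ⟨y, hyX, hyx⟩ := hxw
    constructor
    · rintro ⟨w, hwX, hwB, hw1⟩
      obtain ⟨z, hzX, hzC, hzout⟩ := hTMP w hwX y hyX (by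
        intro b hb
        rw [hwB b hb, hyx b (by simpa using hb.2)])
      refine ⟨z, hzX, ?_, ?_⟩
      · intro b hb
        rw [hzout b (by simpa using hb), hyx b hb]
      · rw [hzC 1 (hBC (by simpa using h1))]
        exact hw1
    · rintro ⟨w, hwX, hwD, hw1⟩
      exact ⟨w, hwX, fun b hb => hwD b (by simpa using hb.2), hw1⟩
end

section
/- A subshift X ⊆ Σ^G is SFT if and only if X is SFT on every cofinite subset of G. -/
open scoped Pointwise


/-- `X` is SFT on the area `S ⊆ G`: there is a finite set of finite forbidden patterns
such that a configuration on `S` is globally valid in `X` if and only if it contains no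
translate of a forbidden pattern whose domain fits inside `S`. -/
def SFTOn {G A : Type*} [Group G] (X : Set (G → A)) (S : Set G) : Prop :=
  ∃ (n : ℕ) (D : Fin n → Finset G) (p : Fin n → G → A),
    ∀ x : G → A, (∃ w ∈ X, ∀ g ∈ S, w g = x g) ↔
      ∀ (g : G) (i : Fin n), (∀ h ∈ D i, g * h ∈ S) →
        ∃ h ∈ D i, x (g * h) ≠ p i h

/-- A subshift is SFT (i.e., SFT on all of `G`) if and only if it is SFT on every
cofinite subset of `G`. -/
theorem SFT_iff_SFT_on_cofinite {G A : Type*} [Group G] [Finite A]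
    [TopologicalSpace A] [DiscreteTopology A]
    (hfg : Group.FG G)
    (X : Set (G → A)) (hclosed : IsClosed X)
    (hshift : ∀ g : G, ∀ x ∈ X, (fun h => x (g⁻¹ * h)) ∈ X) :
    SFTOn X Set.univ ↔ ∀ S : Set G, Sᶜ.Finite → SFTOn X S := by
  classical
  constructor
  · intro hSFT S hS
    rcases isEmpty_or_nonempty A with hA | hA
    · exact ⟨0, Fin.elim0, Fin.elim0, fun x => (hA.false (x 1)).elim⟩
    obtain ⟨n, D, p, hP⟩ := hSFT
    -- membership criterion for X
    have hX : ∀ x : G → A, x ∈ X ↔ ∀ (g : G) (i : Fin n), ∃ h ∈ D i, x (g * h) ≠ p i h := by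
      intro x
      constructor
      · intro hx g i
        exact (hP x).mp ⟨x, hx, fun g _ => rfl⟩ g i (fun h _ => Set.mem_univ _)
      · intro hx
        obtain ⟨w, hwX, hw⟩ := (hP x).mpr (fun g i _ => hx g i)
        have : w = x := funext fun g => hw g (Set.mem_univ g)
        exact this ▸ hwX
    set F : Finset G := hS.toFinset with hF
    have hFS : ∀ g : G, g ∉ F → g ∈ S := by
      intro g hg
      by_contra hgs
      exact hg (hS.mem_toFinset.mpr hgs)
    set U : Finset G := Finset.univ.sup D with hU
    set Q : Finset G := F ∪ F * U⁻¹ * U with hQdef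
    set K : Finset G := Q \ F with hK
    have hKS : ∀ g ∈ K, g ∈ S := by
      intro g hg
      exact hFS g (Finset.mem_sdiff.mp hg).2
    -- key covering property of Q
    have hQ : ∀ (g : G) (i : Fin n), (∃ h ∈ D i, g * h ∈ F) → ∀ h ∈ D i, g * h ∈ Q := by
      rintro g i ⟨h0, hh0, hgh0⟩ h hh
      have hUmem : ∀ a ∈ D i, a ∈ U := fun a ha => Finset.mem_sup.mpr ⟨i, Finset.mem_univ _, ha⟩
      have heq : g * h = (g * h0) * h0⁻¹ * h := by group
      rw [heq]
      refine Finset.mem_union_right _ ?_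
      exact Finset.mul_mem_mul
        (Finset.mul_mem_mul hgh0 (Finset.inv_mem_inv (hUmem h0 hh0))) (hUmem h hh)
    -- the set of non-admissible patterns on K
    let PT := {q : {h // h ∈ K} → A // ¬ ∃ y ∈ X, ∀ (h : G) (hh : h ∈ K), y h = q ⟨h, hh⟩}
    haveI : Fintype PT := Fintype.ofFinite PT
    let eI : (Fin n ⊕ PT) ≃ Fin (n + Fintype.card PT) :=
      (Equiv.sumCongr (Equiv.refl _) (Fintype.equivFin PT)).trans finSumFinEquiv
    refine ⟨n + Fintype.card PT,
      fun i => Sum.elim D (fun _ => K) (eI.symm i),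
      fun i => Sum.elim p (fun q g => if hg : g ∈ K then q.1 ⟨g, hg⟩ else hA.some) (eI.symm i),
      fun x => ?_⟩
    constructor
    · rintro ⟨w, hwX, hw⟩ g i'
      rcases hj : eI.symm i' with i0 | q
      · simp only [hj, Sum.elim_inl]
        intro hfit
        obtain ⟨h, hh, hne⟩ := (hX w).mp hwX g i0
        exact ⟨h, hh, fun hc => hne ((hw _ (hfit h hh)).trans hc)⟩
      · simp only [hj, Sum.elim_inr]
        intro hfit
        by_contra hcon
        push_neg at hcon
        apply q.2
        refine ⟨fun h => w (g * h), ?_, ?_⟩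
        · have := hshift g⁻¹ w hwX
          simpa using this
        · intro h hh
          have h1 : x (g * h) = if hg : h ∈ K then q.1 ⟨h, hg⟩ else hA.some := hcon h hh
          show w (g * h) = q.1 ⟨h, hh⟩
          rw [hw _ (hfit h hh), h1, dif_pos hh]
    · intro hx
      -- the pattern of x on K is admissible
      have hq0 : ∃ y ∈ X, ∀ h ∈ K, y h = x h := by
        by_contra hna
        have hcl : ¬ ∃ y ∈ X, ∀ (h : G) (hh : h ∈ K),
            y h = (fun h : {h // h ∈ K} => x h.1) ⟨h, hh⟩ := by
          rintro ⟨y, hy, hyy⟩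
          exact hna ⟨y, hy, fun h hh => hyy h hh⟩
        set q0 : PT := ⟨fun h => x h.1, hcl⟩ with hq0def
        have hfit : ∀ h ∈ Sum.elim D (fun _ => K) (eI.symm (eI (Sum.inr q0))),
            (1 : G) * h ∈ S := by
          intro h hh
          simp only [Equiv.symm_apply_apply, Sum.elim_inr] at hh
          rw [one_mul]
          exact hKS h hh
        obtain ⟨h, hh, hne⟩ := hx 1 (eI (Sum.inr q0)) hfit
        simp only [Equiv.symm_apply_apply, Sum.elim_inr] at hh hne
        apply hne
        rw [one_mul, dif_pos hh]
      obtain ⟨y, hyX, hy⟩ := hq0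
      refine ⟨fun g => if g ∈ Q then y g else x g, ?_, ?_⟩
      · rw [hX]
        intro g i0
        by_cases hc : ∃ h ∈ D i0, g * h ∈ F
        · have hall := hQ g i0 hc
          obtain ⟨h, hh, hne⟩ := (hX y).mp hyX g i0
          refine ⟨h, hh, ?_⟩
          rw [if_pos (hall h hh)]
          exact hne
        · push_neg at hc
          have hfit : ∀ h ∈ Sum.elim D (fun _ => K) (eI.symm (eI (Sum.inl i0))), g * h ∈ S := by
            intro h hh
            simp only [Equiv.symm_apply_apply, Sum.elim_inl] at hh
            exact hFS _ (hc h hh)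
          obtain ⟨h, hh, hne⟩ := hx g (eI (Sum.inl i0)) hfit
          simp only [Equiv.symm_apply_apply, Sum.elim_inl] at hh hne
          refine ⟨h, hh, ?_⟩
          by_cases hgQ : g * h ∈ Q
          · rw [if_pos hgQ, hy _ (Finset.mem_sdiff.mpr ⟨hgQ, hc h hh⟩)]
            exact hne
          · rw [if_neg hgQ]
            exact hne
      · intro g hg
        by_cases hgQ : g ∈ Q
        · have hgK : g ∈ K := Finset.mem_sdiff.mpr ⟨hgQ, fun hFmem => (hS.mem_toFinset.mp hFmem) hg⟩
          show (if g ∈ Q then y g else x g) = x g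
          rw [if_pos hgQ]
          exact hy _ hgK
        · show (if g ∈ Q then y g else x g) = x g
          rw [if_neg hgQ]
  · intro h
    simpa using h Set.univ (by simp)
end

section
/- Let C be a family of subsets of G \ {e} that is well-quasi-ordered under inclusion and closed under unions of increasing chains. If a subshift X is avo for every C ∈ C, then X is uniformly avo on C: a single avoradius works for all C ∈ C. -/
open scoped Pointwise

/-- If `B` is determining for `C` and `B ⊆ D ⊆ C`, then `B` is determining for `D`. -/
lemma IsDetermining.of_subset {G A : Type*} [Group G] {X : Set (G → A)} {C D B : Set G}
    (h : IsDetermining X C B) (hBD : B ⊆ D) (hDC : D ⊆ C) : IsDetermining X D B := by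
  rintro x ⟨v, hvX, hv⟩ a
  constructor
  · rintro ⟨w, hwX, hwB, hw1⟩
    have key := (h v ⟨v, hvX, fun g _ => rfl⟩ a).mp
      ⟨w, hwX, fun g hg => (hwB g hg).trans (hv g (hBD hg)).symm, hw1⟩
    obtain ⟨w', hw'X, hw'C, hw'1⟩ := key
    exact ⟨w', hw'X, fun g hg => (hw'C g (hDC hg)).trans (hv g hg), hw'1⟩
  · rintro ⟨w, hwX, hwD, hw1⟩
    exact ⟨w, hwX, fun g hg => hwD g (hBD hg), hw1⟩

/-- Enlarging a determining set inside `C` keeps it determining. -/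
lemma IsDetermining.mono {G A : Type*} [Group G] {X : Set (G → A)} {C B B' : Set G}
    (h : IsDetermining X C B) (hBB' : B ⊆ B') (hB'C : B' ⊆ C) : IsDetermining X C B' := by
  intro x hx a
  constructor
  · rintro ⟨w, hwX, hwB', hw1⟩
    exact (h x hx a).mp ⟨w, hwX, fun g hg => hwB' g (hBB' hg), hw1⟩
  · rintro ⟨w, hwX, hwC, hw1⟩
    exact ⟨w, hwX, fun g hg => hwC g (hB'C hg), hw1⟩

lemma spow_mono {G : Type*} [Group G] {S : Set G} (hS1 : (1 : G) ∈ S) :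
    Monotone (fun n : ℕ => S ^ n) := by
  apply monotone_nat_of_le_succ
  intro n x hx
  rw [pow_succ]
  simpa using Set.mul_mem_mul hx hS1

/-- Let `𝒞` be a family of subsets of `G \ {e}` that is well-quasi-ordered under
inclusion (every sequence in `𝒞` has an inclusion-increasing subsequence) and closed
under unions of increasing chains. If a subshift `X` is avo for every `C ∈ 𝒞`, then
`X` is uniformly avo on `𝒞`: a single avoradius `r` works for all `C ∈ 𝒞`, i.e.
`C ∩ S ^ r` is determining for `C` where `S ^ r` is the `r`-ball of the word metric. -/
theorem wqo_avo_implies_uniformly_avo {G A : Type*} [Group G] [Finite A]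
    [TopologicalSpace A] [DiscreteTopology A]
    (S : Set G) (hS1 : (1 : G) ∈ S) (hSinv : S⁻¹ = S) (hSfin : S.Finite)
    (hSgen : ∀ g : G, ∃ n : ℕ, g ∈ S ^ n)
    (X : Set (G → A)) (hclosed : IsClosed X)
    (hshift : ∀ g : G, ∀ x ∈ X, (fun h => x (g⁻¹ * h)) ∈ X)
    (𝒞 : Set (Set G)) (h𝒞e : ∀ C ∈ 𝒞, (1 : G) ∉ C)
    (hwqo : ∀ f : ℕ → Set G, (∀ k, f k ∈ 𝒞) →
      ∃ φ : ℕ → ℕ, StrictMono φ ∧ ∀ k, f (φ k) ⊆ f (φ (k + 1)))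
    (hunion : ∀ f : ℕ → Set G, (∀ k, f k ∈ 𝒞) → (∀ k, f k ⊆ f (k + 1)) →
      (⋃ k, f k) ∈ 𝒞)
    (havo : ∀ C ∈ 𝒞, ∃ B : Set G, B ⊆ C ∧ B.Finite ∧ IsDetermining X C B) :
    ∃ r : ℕ, ∀ C ∈ 𝒞, IsDetermining X C (C ∩ S ^ r) := by
  by_contra hcon
  push_neg at hcon
  choose f hf𝒞 hnd using hcon
  obtain ⟨φ, hφ, hchain⟩ := hwqo f hf𝒞
  set g : ℕ → Set G := fun k => f (φ k) with hg
  have hg𝒞 : ∀ k, g k ∈ 𝒞 := fun k => hf𝒞 (φ k)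
  have hgmono : Monotone g := monotone_nat_of_le_succ hchain
  have hD𝒞 : (⋃ k, g k) ∈ 𝒞 := hunion g hg𝒞 hchain
  set D : Set G := ⋃ k, g k with hDdef
  obtain ⟨B, hBD, hBfin, hBdet⟩ := havo D hD𝒞
  -- combined monotone family
  set h : ℕ → Set G := fun k => g k ∩ S ^ k with hh
  have hhmono : Monotone h := fun m n hmn =>
    Set.inter_subset_inter (hgmono hmn) (spow_mono hS1 hmn)
  have hBsub : ∀ b ∈ B, ∃ k, b ∈ h k := by
    intro b hb
    obtain ⟨_, ⟨k1, rfl⟩, hk1⟩ := hBD hb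
    obtain ⟨k2, hk2⟩ := hSgen b
    exact ⟨max k1 k2, hgmono (le_max_left k1 k2) hk1,
      spow_mono hS1 (le_max_right k1 k2) hk2⟩
  choose! idx hidx using hBsub
  obtain ⟨N, hN⟩ : ∃ N, B ⊆ h N := by
    refine ⟨hBfin.toFinset.sup idx, fun b hb => ?_⟩
    exact hhmono (Finset.le_sup (hBfin.mem_toFinset.mpr hb)) (hidx b hb)
  -- move to index φ N ≥ N
  have hBhφN : B ⊆ f (φ N) ∩ S ^ (φ N) := fun b hb =>
    ⟨(hN hb).1, spow_mono hS1 hφ.le_apply (hN hb).2⟩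
  have hgD : g N ⊆ D := Set.subset_iUnion g N
  have hBdetg : IsDetermining X (f (φ N)) B :=
    hBdet.of_subset (fun b hb => (hN hb).1) hgD
  have hfinal : IsDetermining X (f (φ N)) (f (φ N) ∩ S ^ (φ N)) :=
    hBdetg.mono hBhφN Set.inter_subset_left
  exact hnd (φ N) hfinal
end

section
/- Let X ⊆ Σ^G be a nonempty subshift that is uniformly avo with avoradius r for a family C of subsets of G \ {e}. If D ⊆ G admits a C-well-ordering, then X|D is SFT with window size r: forbidding exactly the patterns with domain in the r-ball that do not appear in X defines X|D. -/
open scoped Pointwise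

/-!
By well-founded induction along the `𝒞`-well-ordering, `x` agrees with a point of `X` on every
downset `{t ≤ s}` of `D`. At `s`, translate `s` to the identity: the strict downset becomes some
`C ∈ 𝒞`, and the locally valid pattern of `x` on `{1} ∪ (C ∩ S ^ r)` has the same symbol at `1`
as some point of `X` agreeing with `x` on all of `C`, because `C ∩ S ^ r` is determining for `C`.
Unions of downsets are handled by compactness: the points of `X` agreeing with `x` on the
downsets form a chain of nonempty closed sets.
-/

open Set

/-- `x|_T ∈ X|_T`. -/
def InRestriction {α A : Type*} (X : Set (α → A)) (T : Set α) (x : α → A) : Prop :=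
  ∃ w ∈ X, EqOn w x T

section Restriction

variable {α A : Type*} {X : Set (α → A)} {x : α → A}

theorem InRestriction.mono {T T' : Set α} (h : InRestriction X T x) (hT : T' ⊆ T) :
    InRestriction X T' x :=
  let ⟨w, hwX, hw⟩ := h
  ⟨w, hwX, hw.mono hT⟩

variable [TopologicalSpace A] [T2Space A] [CompactSpace A]

theorem InRestriction.iUnion_of_directed (hX : IsClosed X) (hne : X.Nonempty) {ι : Type*}
    {T : ι → Set α} (hT : Directed (· ⊆ ·) T) (h : ∀ i, InRestriction X (T i) x) :
    InRestriction X (⋃ i, T i) x := by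
  cases isEmpty_or_nonempty ι with
  | inl _ =>
    obtain ⟨w, hw⟩ := hne
    exact ⟨w, hw, by simp [EqOn]⟩
  | inr _ =>
    let K : ι → Set (α → A) := fun i => X ∩ {w | EqOn w x (T i)}
    have hKclosed : ∀ i, IsClosed (K i) := fun i =>
      hX.inter <| by
        simp only [EqOn, ofPred_forall]
        exact isClosed_biInter fun g _ => isClosed_eq (continuous_apply g) continuous_const
    have hKdir : Directed (· ⊇ ·) K := fun i j =>
      let ⟨k, hik, hjk⟩ := hT i j
      ⟨k, fun _ hw => ⟨hw.1, hw.2.mono hik⟩, fun _ hw => ⟨hw.1, hw.2.mono hjk⟩⟩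
    obtain ⟨w, hw⟩ := IsCompact.nonempty_iInter_of_directed_nonempty_isCompact_isClosed K hKdir
      h (fun i => (hKclosed i).isCompact) hKclosed
    rw [mem_iInter] at hw
    refine ⟨w, (hw (Classical.arbitrary ι)).1, fun g hg => ?_⟩
    obtain ⟨i, hi⟩ := mem_iUnion.mp hg
    exact (hw i).2 hi

theorem InRestriction.range_of_wellFoundedLT {ι : Type*} [LinearOrder ι] [WellFoundedLT ι]
    (hX : IsClosed X) (hne : X.Nonempty) (f : ι → α)
    (hstep : ∀ s, InRestriction X (f '' Iio s) x → InRestriction X (f '' Iic s) x) :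
    InRestriction X (range f) x := by
  have hmono : Monotone fun s => f '' Iic s := fun _ _ hst => image_mono (Iic_subset_Iic.mpr hst)
  have hIic : ∀ s, InRestriction X (f '' Iic s) x := fun s =>
    WellFoundedLT.induction s fun s ih => hstep s <| by
      have hIio : f '' Iio s = ⋃ t : Iio s, f '' Iic (t : ι) := by
        ext a
        simp only [mem_image, mem_iUnion, mem_Iio, mem_Iic, Subtype.exists, exists_prop]
        exact ⟨fun ⟨t, hts, hta⟩ => ⟨t, hts, t, le_rfl, hta⟩,
          fun ⟨_, hts, t, htu, hta⟩ => ⟨t, htu.trans_lt hts, hta⟩⟩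
      rw [hIio]
      exact iUnion_of_directed hX hne (hmono.comp (Subtype.mono_coe _)).directed_le
        fun t => ih t t.2
  rw [← image_univ, ← iUnion_Iic, image_iUnion]
  exact InRestriction.iUnion_of_directed hX hne hmono.directed_le hIic

end Restriction

section Group

variable {G A : Type*} [Group G] {X : Set (G → A)}

theorem inRestriction_image_mul_left_iff (hshift : ∀ g : G, ∀ x ∈ X, (fun h => x (g⁻¹ * h)) ∈ X)
    (g : G) (T : Set G) (x : G → A) :
    InRestriction X ((g * ·) '' T) x ↔ InRestriction X T (fun h => x (g * h)) := by
  constructor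
  · rintro ⟨w, hwX, hw⟩
    exact ⟨fun h => w (g * h), by simpa using hshift g⁻¹ w hwX,
      fun h hh => hw (mem_image_of_mem _ hh)⟩
  · rintro ⟨w, hwX, hw⟩
    refine ⟨fun h => w (g⁻¹ * h), hshift g w hwX, ?_⟩
    rintro _ ⟨h, hh, rfl⟩
    simpa using hw hh

theorem IsDetermining.inRestriction_insert_one {C B : Set G} {y : G → A}
    (hdet : IsDetermining X C B) (hC : InRestriction X C y)
    (hB : InRestriction X (insert 1 B) y) : InRestriction X (insert 1 C) y := by
  obtain ⟨w, hwX, hw⟩ := hB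
  obtain ⟨w', hw'X, hw'C, hw'1⟩ :=
    (hdet y hC (y 1)).mp ⟨w, hwX, fun g hg => hw (mem_insert_of_mem _ hg), hw (mem_insert _ _)⟩
  exact ⟨w', hw'X, fun g hg => hg.elim (· ▸ hw'1) (hw'C g)⟩

theorem InRestriction.insert_of_isDetermining
    (hshift : ∀ g : G, ∀ x ∈ X, (fun h => x (g⁻¹ * h)) ∈ X) {P B : Set G} {s : G} {x : G → A}
    (hdet : IsDetermining X ((s⁻¹ * ·) '' P) B) (hP : InRestriction X P x)
    (hloc : InRestriction X (insert 1 B) fun h => x (s * h)) : InRestriction X (insert s P) x := by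
  have hCP : (s * ·) '' ((s⁻¹ * ·) '' P) = P := by
    rw [image_image]
    simp
  have hinsert : insert s P = (s * ·) '' insert 1 ((s⁻¹ * ·) '' P) := by
    rw [image_insert_eq, mul_one, hCP]
  rw [hinsert, inRestriction_image_mul_left_iff hshift]
  refine hdet.inRestriction_insert_one ?_ hloc
  rwa [← inRestriction_image_mul_left_iff hshift, hCP]

end Group

theorem uniformly_avo_wellordered_SFT_general {G A : Type*} [Group G] [Finite A]
    [TopologicalSpace A] [DiscreteTopology A]
    (S : Set G) (hS1 : (1 : G) ∈ S)
    (X : Set (G → A)) (hclosed : IsClosed X)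
    (hshift : ∀ g : G, ∀ x ∈ X, (fun h => x (g⁻¹ * h)) ∈ X)
    (hne : X.Nonempty)
    (𝒞 : Set (Set G))
    (r : ℕ) (havo : ∀ C ∈ 𝒞, IsDetermining X C (C ∩ S ^ r))
    (D : Set G)
    (hwo : ∃ lt : D → D → Prop, IsWellOrder D lt ∧
      ∀ s : D, (fun t => (s : G)⁻¹ * t) '' {t : G | ∃ h : t ∈ D, lt ⟨t, h⟩ s} ∈ 𝒞) :
    ∀ x : G → A, (∃ w ∈ X, ∀ g ∈ D, w g = x g) ↔
      ∀ (g : G) (E : Set G), E ⊆ S ^ r → (∀ h ∈ E, g * h ∈ D) →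
        ∃ w ∈ X, ∀ h ∈ E, w h = x (g * h) := by
  intro x
  refine ⟨fun hD g E _ hgE => (inRestriction_image_mul_left_iff hshift g E x).mp
    (InRestriction.mono hD (image_subset_iff.mpr hgE)), fun hloc => ?_⟩
  obtain ⟨lt, hlt, hdown⟩ := hwo
  let : LinearOrder D := IsWellOrder.linearOrder lt
  have : WellFoundedLT D := ⟨hlt.wf⟩
  have : CompactSpace A := Finite.compactSpace
  change InRestriction X D x
  rw [← Subtype.range_coe (s := D)]
  refine InRestriction.range_of_wellFoundedLT hclosed hne _ fun s hP => ?_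
  have hIio : {t : G | ∃ h : t ∈ D, lt ⟨t, h⟩ s} = (↑) '' Iio s := by
    ext t; simp; rfl
  rw [← Iio_insert, image_insert_eq]
  refine hP.insert_of_isDetermining hshift (havo _ (hIio ▸ hdown s)) <|
    hloc s _ (insert_subset (one_mem_pow hS1) inter_subset_right) ?_
  rintro h (rfl | ⟨⟨_, ⟨t, -, rfl⟩, rfl⟩, -⟩) <;> simp

/-- Let `X ⊆ A^G` be a nonempty subshift that is uniformly avo with avoradius `r` for a
family `𝒞` of subsets of `G \ {e}` (`S ^ r` being the `r`-ball of the word metric). If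
`D ⊆ G` admits a `𝒞`-well-ordering (a well-ordering of `D` all of whose translated
strict downsets lie in `𝒞`), then `X|D` is SFT with window size `r`: a configuration on
`D` is globally valid if and only if each of its subpatterns with domain a translate of
a subset of the `r`-ball fitting inside `D` appears in `X`. -/
theorem uniformly_avo_wellordered_SFT {G A : Type*} [Group G] [Finite A]
    [TopologicalSpace A] [DiscreteTopology A]
    (S : Set G) (hS1 : (1 : G) ∈ S) (hSinv : S⁻¹ = S) (hSfin : S.Finite)
    (hSgen : ∀ g : G, ∃ n : ℕ, g ∈ S ^ n)
    (X : Set (G → A)) (hclosed : IsClosed X)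
    (hshift : ∀ g : G, ∀ x ∈ X, (fun h => x (g⁻¹ * h)) ∈ X)
    (hne : X.Nonempty)
    (𝒞 : Set (Set G)) (h𝒞e : ∀ C ∈ 𝒞, (1 : G) ∉ C)
    (r : ℕ) (havo : ∀ C ∈ 𝒞, IsDetermining X C (C ∩ S ^ r))
    (D : Set G)
    (hwo : ∃ lt : D → D → Prop, IsWellOrder D lt ∧
      ∀ s : D, (fun t => (s : G)⁻¹ * t) '' {t : G | ∃ h : t ∈ D, lt ⟨t, h⟩ s} ∈ 𝒞) :
    ∀ x : G → A, (∃ w ∈ X, ∀ g ∈ D, w g = x g) ↔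
      ∀ (g : G) (E : Set G), E ⊆ S ^ r → (∀ h ∈ E, g * h ∈ D) →
        ∃ w ∈ X, ∀ h ∈ E, w h = x (g * h) :=
  uniformly_avo_wellordered_SFT_general S hS1 X hclosed hshift hne 𝒞 r havo D hwo
end

section
/- The family of inductive intervals on ℤ^d (with the standard polycycle structure) is a well-quasi-order under inclusion: every infinite sequence of inductive intervals contains an infinite subsequence that is increasing under set containment. -/
/-- An interval of `ℤ` grazing `0`: one of `(-∞,-1]`, `[-m,-1]`, `∅`, `[1,m]`, `[1,∞)`. -/
def IsGrazing (I : Set ℤ) : Prop :=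
  I = ∅ ∨ I = Set.Iic (-1) ∨ (∃ m : ℤ, I = Set.Icc (-m) (-1)) ∨
    (∃ m : ℤ, I = Set.Icc 1 m) ∨ I = Set.Ici 1

/-- The inductive interval of `ℤ^d` determined by the axis intervals `I`: all nonzero
vectors `v` such that `v i ∈ I i` for the largest index `i` with `v i ≠ 0`. -/
def indInterval {d : ℕ} (I : Fin d → Set ℤ) : Set (Fin d → ℤ) :=
  {v | ∃ i : Fin d, v i ≠ 0 ∧ (∀ j : Fin d, i < j → v j = 0) ∧ v i ∈ I i}

/-- `C` is an inductive interval of `ℤ^d`. -/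
def IsIndInterval {d : ℕ} (C : Set (Fin d → ℤ)) : Prop :=
  ∃ I : Fin d → Set ℤ, (∀ i, IsGrazing (I i)) ∧ C = indInterval I

/-!
A grazing interval is determined by how far it reaches to the left and to the right of `0`,
a pair in `ℕ∞ × ℕ∞`, and it grows with this pair. Hence the inductive intervals of `ℤ^d` are
a monotone image of `(ℕ∞ × ℕ∞)^d`, which is well-quasi-ordered by Dickson's lemma.
-/

def grazeSet (p : ℕ∞ × ℕ∞) : Set ℤ :=
  {x | x < 0 ∧ (x.natAbs : ℕ∞) ≤ p.1 ∨ 0 < x ∧ (x.natAbs : ℕ∞) ≤ p.2}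

theorem grazeSet_mono : Monotone grazeSet := by
  rintro p q ⟨h₁, h₂⟩ x (⟨hx, hp⟩ | ⟨hx, hp⟩)
  exacts [.inl ⟨hx, hp.trans h₁⟩, .inr ⟨hx, hp.trans h₂⟩]

theorem IsGrazing.exists_eq_grazeSet {I : Set ℤ} (h : IsGrazing I) : ∃ p, I = grazeSet p := by
  rcases h with rfl | rfl | ⟨m, rfl⟩ | ⟨m, rfl⟩ | rfl
  · exact ⟨(0, 0), by ext; simp [grazeSet]; omega⟩
  · exact ⟨(⊤, 0), by ext; simp [grazeSet]; omega⟩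
  · exact ⟨(m.toNat, 0), by ext; simp [grazeSet]; omega⟩
  · exact ⟨(0, m.toNat), by ext; simp [grazeSet]; omega⟩
  · exact ⟨(0, ⊤), by ext; simp [grazeSet]; omega⟩

theorem indInterval_mono {d : ℕ} : Monotone (indInterval (d := d)) := by
  rintro I J hIJ v ⟨i, hv, hlast, hi⟩
  exact ⟨i, hv, hlast, hIJ i hi⟩

theorem IsIndInterval.exists_eq_indInterval_grazeSet {d : ℕ} {C : Set (Fin d → ℤ)}
    (hC : IsIndInterval C) : ∃ p : Fin d → ℕ∞ × ℕ∞, C = indInterval (grazeSet ∘ p) := by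
  obtain ⟨I, hI, rfl⟩ := hC
  choose p hp using fun i => (hI i).exists_eq_grazeSet
  exact ⟨p, congrArg indInterval (funext hp)⟩

/-- The family of inductive intervals on `ℤ^d` is a well-quasi-order under inclusion:
every infinite sequence of inductive intervals contains an infinite subsequence that is
increasing under set containment. -/
theorem indInterval_wqo {d : ℕ} (C : ℕ → Set (Fin d → ℤ))
    (hC : ∀ n, IsIndInterval (C n)) :
    ∃ φ : ℕ → ℕ, StrictMono φ ∧ ∀ n, C (φ n) ⊆ C (φ (n + 1)) := by
  choose p hp using fun n => (hC n).exists_eq_indInterval_grazeSet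
  obtain ⟨g, hg⟩ := wellQuasiOrdered_le.exists_monotone_subseq p
  refine ⟨g, g.strictMono, fun n => ?_⟩
  rw [hp, hp]
  exact indInterval_mono fun i => grazeSet_mono (hg _ _ n.le_succ i)
end

section
/- Let G be a finitely generated group and X ⊆ Σ^G a subshift with topological strong spatial mixing. Then X is a subshift of finite type. -/
open scoped Pointwise

/-!
Forbid every pattern on the ball `S ^ n` (with `n` the mixing gap) that does not appear in `X`.
If `x` avoids these, each of its ball patterns appears in `X`. Adding the points of a finite set
`F` one at a time, TSSM glues the pattern of `x` on `F` to its pattern on the ball around the new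
point `a`, the part of `F` inside that ball separating the rest of `F` from `a`. So every finite
pattern of `x` appears in `X`, and `x ∈ X` because `X` is closed.
-/

open Set

section

variable {G A : Type*}

def AppearsOn (X : Set (G → A)) (F : Set G) (x : G → A) : Prop :=
  ∃ p ∈ X, EqOn p x F

namespace AppearsOn

variable {X : Set (G → A)} {F F' : Set G} {x y : G → A}

lemma of_mem (hx : x ∈ X) (F : Set G) : AppearsOn X F x := ⟨x, hx, fun _ _ ↦ rfl⟩

lemma mono (h : AppearsOn X F x) (hF : F' ⊆ F) : AppearsOn X F' x :=
  let ⟨p, hp, hpx⟩ := h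
  ⟨p, hp, hpx.mono hF⟩

lemma congr (h : AppearsOn X F x) (hxy : EqOn x y F) : AppearsOn X F y :=
  let ⟨p, hp, hpx⟩ := h
  ⟨p, hp, hpx.trans hxy⟩

lemma smul [Group G] (hX : ∀ g : G, ∀ x ∈ X, (fun h ↦ x (g⁻¹ * h)) ∈ X) {g : G}
    (h : AppearsOn X F (fun h ↦ x (g * h))) : AppearsOn X (g • F) x := by
  obtain ⟨p, hp, hpx⟩ := h
  refine ⟨fun h ↦ p (g⁻¹ * h), hX g p hp, ?_⟩
  rintro _ ⟨f, hf, rfl⟩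
  simpa using hpx hf

end AppearsOn

lemma mem_of_forall_appearsOn [TopologicalSpace A] [DiscreteTopology A] {X : Set (G → A)}
    (hX : IsClosed X) {x : G → A} (hx : ∀ F : Set G, F.Finite → AppearsOn X F x) : x ∈ X := by
  by_contra hxX
  obtain ⟨F, u, hu, hsub⟩ := isOpen_pi_iff.mp hX.isOpen_compl x hxX
  obtain ⟨p, hp, hpx⟩ := hx F F.finite_toSet
  refine hsub (fun g hg ↦ ?_) hp
  rw [hpx hg]
  exact (hu g hg).2

namespace TSSM

variable [Group G] {X : Set (G → A)} {S : Set G} {n : ℕ}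

lemma appearsOn_insert (h : TSSM X S n) (hS1 : (1 : G) ∈ S) (hSinv : S⁻¹ = S) {F : Set G}
    (hF : F.Finite) {a : G} (ha : a ∉ F) {x : G → A} (hxF : AppearsOn X F x)
    (hxa : AppearsOn X (a • S ^ n) x) : AppearsOn X (insert a F) x := by
  set B := a • S ^ n
  have haB : a ∈ B := ⟨1, one_mem_pow hS1, mul_one a⟩
  have hfar : ∀ u ∈ F \ B, ∀ v ∈ ({a} : Set G), ∀ k < n, u⁻¹ * v ∉ S ^ k := by
    rintro u ⟨-, huB⟩ v hv k hk hua
    rw [mem_singleton_iff.mp hv] at hua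
    have hau : a⁻¹ * u ∈ S ^ k := by
      rw [← hSinv, inv_pow]
      simpa using hua
    exact huB (mem_smul_set_iff_inv_smul_mem.mpr (pow_subset_pow_right hS1 hk.le hau))
  obtain ⟨p, hp, hpx⟩ := h (F \ B) {a} (F ∩ B) hF.sdiff (finite_singleton a) (hF.inter_of_left B)
    (disjoint_singleton_right.mpr fun h ↦ ha h.1) disjoint_sdiff_inter
    (disjoint_singleton_left.mpr fun h ↦ ha h.1) hfar x
    (hxF.mono (union_subset sdiff_subset inter_subset_left))
    (hxa.mono (union_subset inter_subset_right (singleton_subset_iff.mpr haB)))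
  refine ⟨p, hp, EqOn.mono ?_ hpx⟩
  rw [sdiff_union_inter, union_singleton]

lemma appearsOn_of_forall_ball (h : TSSM X S n) (hS1 : (1 : G) ∈ S) (hSinv : S⁻¹ = S)
    {x : G → A} (hx : ∀ g : G, AppearsOn X (g • S ^ n) x) {F : Set G} (hF : F.Finite) :
    AppearsOn X F x := by
  induction F, hF using Set.Finite.induction_on with
  | empty => exact (hx 1).mono (empty_subset _)
  | @insert a F ha hF ih => exact h.appearsOn_insert hS1 hSinv hF ha ih (hx a)

end TSSM

lemma exists_forbidden_patterns [Finite A] (X : Set (G → A)) (D : Finset G) :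
    ∃ (m : ℕ) (p : Fin m → G → A), ∀ y, AppearsOn X D y ↔ ∀ i, ∃ h ∈ D, y h ≠ p i h := by
  set R : Set (D → A) := D.restrict '' {y : G → A | ¬ AppearsOn X D y}
  obtain ⟨m, ⟨e⟩⟩ := Finite.exists_equiv_fin R
  choose p hp_bad hp_restrict using fun i ↦ (e.symm i).2
  refine ⟨m, p, fun y ↦ ⟨fun hy i ↦ ?_, fun hy ↦ ?_⟩⟩
  · by_contra! hyp
    exact hp_bad i (hy.congr hyp)
  · by_contra hy'
    set i := e ⟨D.restrict y, mem_image_of_mem _ hy'⟩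
    have hpy : D.restrict (p i) = D.restrict y := by
      rw [hp_restrict, Equiv.symm_apply_apply]
    obtain ⟨h, hh, hne⟩ := hy i
    exact hne (congrFun hpy ⟨h, hh⟩).symm

end

theorem tssm_implies_SFT_general {G A : Type*} [Group G] [Finite A]
    [TopologicalSpace A] [DiscreteTopology A]
    (S : Set G) (hS1 : (1 : G) ∈ S) (hSinv : S⁻¹ = S) (hSfin : S.Finite)
    (X : Set (G → A)) (hclosed : IsClosed X)
    (hshift : ∀ g : G, ∀ x ∈ X, (fun h => x (g⁻¹ * h)) ∈ X)
    (htssm : ∃ n : ℕ, TSSM X S n) :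
    ∃ (n : ℕ) (D : Fin n → Finset G) (p : Fin n → G → A),
      X = {x : G → A | ∀ (g : G) (i : Fin n), ∃ h ∈ D i, x (g * h) ≠ p i h} := by
  classical
  obtain ⟨n, htssm⟩ := htssm
  set D := hSfin.toFinset ^ n
  have hD : (D : Set G) = S ^ n := by simp [D]
  obtain ⟨m, p, hp⟩ := exists_forbidden_patterns X D
  refine ⟨m, fun _ ↦ D, p, Set.ext fun x ↦ ?_⟩
  simp only [mem_ofPred_eq, ← hp]
  constructor
  · intro hx g
    exact AppearsOn.of_mem (by simpa using hshift g⁻¹ x hx) _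
  · intro hx
    refine mem_of_forall_appearsOn hclosed fun F hF ↦
      htssm.appearsOn_of_forall_ball hS1 hSinv (fun g ↦ ?_) hF
    rw [← hD]
    exact (hx g).smul hshift

/-- Let `G` be a finitely generated group (with finite symmetric generating set `S`
containing the identity) and `X ⊆ A^G` a subshift with topological strong spatial
mixing. Then `X` is a subshift of finite type: it is defined by a finite set of finite
forbidden patterns. -/
theorem tssm_implies_SFT {G A : Type*} [Group G] [Finite A]
    [TopologicalSpace A] [DiscreteTopology A]
    (S : Set G) (hS1 : (1 : G) ∈ S) (hSinv : S⁻¹ = S) (hSfin : S.Finite)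
    (hSgen : ∀ g : G, ∃ n : ℕ, g ∈ S ^ n)
    (X : Set (G → A)) (hclosed : IsClosed X)
    (hshift : ∀ g : G, ∀ x ∈ X, (fun h => x (g⁻¹ * h)) ∈ X)
    (htssm : ∃ n : ℕ, TSSM X S n) :
    ∃ (n : ℕ) (D : Fin n → Finset G) (p : Fin n → G → A),
      X = {x : G → A | ∀ (g : G) (i : Fin n), ∃ h ∈ D i, x (g * h) ≠ p i h} :=
  tssm_implies_SFT_general S hS1 hSinv hSfin X hclosed hshift htssm
end

section
/- Every limit of tree convex sets (in the Cantor topology on subsets of a free group) is a limit tree convex set, and conversely every limit tree convex set is a limit of finite tree convex sets; i.e., a subset C of a free group is limit tree convex if and only if it is a limit in Cantor space of tree convex sets. -/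
/-!
Limits of tree convex sets are limit tree convex because the condition only involves the
membership of finitely many points at a time. Conversely, a limit tree convex set `C` is the limit
of its truncations `C ∩ B_n` to the balls about `1`: these are finite, and they are tree convex
because balls are tree convex and the condition is preserved under intersection. Balls are tree
convex because in a tree a point `v` on the geodesic from `u` to `w` lies on the geodesic from any
`x` to `u` or on the one from `x` to `w`.
-/

/-- Word-metric distance on the free group (w.r.t. the free generating set):
the length of the reduced word of `u⁻¹ * v`. -/
def fgDist {α : Type*} [DecidableEq α] (u v : FreeGroup α) : ℕ :=
  FreeGroup.norm (u⁻¹ * v)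

/-- The tree convexity condition: whenever `u, w ∈ C` and `v` lies on the geodesic
between `u` and `w`, the ball of radius `min(d(v,u), d(v,w)) - 1` around `v` is
contained in `C`. A finite set satisfying this is tree convex; an arbitrary set
satisfying this is a limit tree convex set. -/
def TreeConvexCond {α : Type*} [DecidableEq α] (C : Set (FreeGroup α)) : Prop :=
  ∀ u ∈ C, ∀ w ∈ C, ∀ v : FreeGroup α,
    fgDist u v + fgDist v w = fgDist u w →
    ∀ g : FreeGroup α, fgDist v g + 1 ≤ min (fgDist v u) (fgDist v w) → g ∈ C

namespace FreeGroup

variable {α : Type*} [DecidableEq α]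

theorem norm_mul_of_isReduced_append {x y : FreeGroup α}
    (h : IsReduced (x.toWord ++ y.toWord)) : norm (x * y) = norm x + norm y := by
  rw [norm, toWord_mul, h.reduce_eq, List.length_append, norm, norm]

theorem exists_toWord_head?_eq_of_norm_mul_ne {x y : FreeGroup α}
    (h : norm (x * y) ≠ norm x + norm y) :
    ∃ p ∈ x.toWord.getLast?, y.toWord.head? = some (p.1, !p.2) := by
  contrapose! h
  refine norm_mul_of_isReduced_append (List.isChain_append.2
    ⟨isReduced_toWord, isReduced_toWord, fun p hp q hq hpq => ?_⟩)
  by_contra hne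
  rw [Option.mem_def] at hq
  exact h p hp (hq.trans (congrArg some (Prod.ext hpq.symm (Bool.eq_not.2 (Ne.symm hne)))))

theorem norm_inv_mul_lt_of_toWord_head?_eq {x y : FreeGroup α} {p : α × Bool}
    (hx : x.toWord.head? = some p) (hy : y.toWord.head? = some p) :
    norm (x⁻¹ * y) < norm x + norm y := by
  obtain ⟨s, hs⟩ : ∃ s, x.toWord = p :: s := List.head?_eq_some_iff.1 hx
  obtain ⟨t, ht⟩ : ∃ t, y.toWord = p :: t := List.head?_eq_some_iff.1 hy
  have hx' : x = mk [p] * mk s := by rw [mul_mk, List.singleton_append, ← hs, mk_toWord]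
  have hy' : y = mk [p] * mk t := by rw [mul_mk, List.singleton_append, ← ht, mk_toWord]
  calc norm (x⁻¹ * y) = norm ((mk s)⁻¹ * mk t) := by rw [hx', hy']; group
    _ ≤ s.length + t.length := by
      grw [norm_mul_le, norm_inv_eq, norm_mk_le, norm_mk_le]
    _ < norm x + norm y := by rw [norm, norm, hs, ht, List.length_cons, List.length_cons]; omega

/-- In the Cayley tree, if `1` lies on the geodesic from `a` to `b`, then every `x` reaches `a`
or `b` through `1`: the last letter of `x` can cancel against the first letter of at most one of
them. -/
theorem norm_mul_eq_add_or_norm_mul_eq_add {a b : FreeGroup α}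
    (hab : norm (a⁻¹ * b) = norm a + norm b) (x : FreeGroup α) :
    norm (x * a) = norm x + norm a ∨ norm (x * b) = norm x + norm b := by
  by_contra! h
  obtain ⟨p, hp, ha⟩ := exists_toWord_head?_eq_of_norm_mul_ne h.1
  obtain ⟨q, hq, hb⟩ := exists_toWord_head?_eq_of_norm_mul_ne h.2
  obtain rfl : p = q := Option.some_injective _ (hp.symm.trans hq)
  exact (norm_inv_mul_lt_of_toWord_head?_eq ha hb).ne hab

theorem finite_setOf_norm_le [Finite α] (n : ℕ) : {x : FreeGroup α | norm x ≤ n}.Finite :=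
  (List.finite_length_le _ n).preimage toWord_injective.injOn

end FreeGroup

section FreeGroupMetric

open FreeGroup

variable {α : Type*} [DecidableEq α]

theorem fgDist_triangle (x y z : FreeGroup α) : fgDist x z ≤ fgDist x y + fgDist y z := by
  simpa [fgDist, mul_assoc] using norm_mul_le (x⁻¹ * y) (y⁻¹ * z)

theorem fgDist_comm (x y : FreeGroup α) : fgDist x y = fgDist y x := by
  rw [fgDist, fgDist, ← norm_inv_eq, mul_inv_rev, inv_inv]

theorem fgDist_eq_add_or_fgDist_eq_add {u v w : FreeGroup α}
    (hv : fgDist u v + fgDist v w = fgDist u w) (x : FreeGroup α) :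
    fgDist x u = fgDist x v + fgDist v u ∨ fgDist x w = fgDist x v + fgDist v w := by
  rw [fgDist_comm u v] at hv
  have hab : norm ((v⁻¹ * u)⁻¹ * (v⁻¹ * w)) = norm (v⁻¹ * u) + norm (v⁻¹ * w) := by
    simpa [fgDist, mul_assoc] using hv.symm
  simpa [fgDist, mul_assoc] using norm_mul_eq_add_or_norm_mul_eq_add hab (x⁻¹ * v)

theorem finite_setOf_fgDist_le [Finite α] (x : FreeGroup α) (n : ℕ) :
    {g | fgDist x g ≤ n}.Finite :=
  (finite_setOf_norm_le n).preimage (mul_right_injective x⁻¹).injOn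

end FreeGroupMetric

section TreeConvex

variable {α : Type*} [DecidableEq α]

theorem TreeConvexCond.inter {C D : Set (FreeGroup α)} (hC : TreeConvexCond C)
    (hD : TreeConvexCond D) : TreeConvexCond (C ∩ D) :=
  fun u hu w hw v hv g hg => ⟨hC u hu.1 w hw.1 v hv g hg, hD u hu.2 w hw.2 v hv g hg⟩

theorem treeConvexCond_setOf_fgDist_le (x : FreeGroup α) (n : ℕ) :
    TreeConvexCond {g | fgDist x g ≤ n} := by
  intro u hu w hw v hv g hg
  have hxg := fgDist_triangle x v g
  have := min_le_left (fgDist v u) (fgDist v w)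
  have := min_le_right (fgDist v u) (fgDist v w)
  simp only [Set.mem_ofPred_eq] at hu hw ⊢
  rcases fgDist_eq_add_or_fgDist_eq_add hv x with h | h <;> omega

theorem TreeConvexCond.of_eventually_mem_iff {ι : Type*} {l : Filter ι} [l.NeBot]
    {Cs : ι → Set (FreeGroup α)} {C : Set (FreeGroup α)} (hCs : ∀ i, TreeConvexCond (Cs i))
    (hlim : ∀ g, ∀ᶠ i in l, g ∈ Cs i ↔ g ∈ C) : TreeConvexCond C := by
  intro u hu w hw v hv g hg
  obtain ⟨i, hui, hwi, hgi⟩ := ((hlim u).and ((hlim w).and (hlim g))).exists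
  exact hgi.1 (hCs i u (hui.2 hu) w (hwi.2 hw) v hv g hg)

end TreeConvex

/-- A subset `C` of a finitely generated free group is a limit tree convex set if and
only if it is a limit in Cantor space (pointwise convergence of indicator functions) of
(finite) tree convex sets. -/
theorem limitTreeConvex_iff_limit_of_treeConvex {α : Type*} [DecidableEq α] [Finite α]
    (C : Set (FreeGroup α)) :
    TreeConvexCond C ↔
      ∃ Cs : ℕ → Set (FreeGroup α),
        (∀ n, (Cs n).Finite ∧ TreeConvexCond (Cs n)) ∧
        ∀ g : FreeGroup α, ∃ N : ℕ, ∀ n ≥ N, (g ∈ Cs n ↔ g ∈ C) := by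
  constructor
  · intro hC
    refine ⟨fun n => C ∩ {g | fgDist 1 g ≤ n}, fun n => ⟨?_, ?_⟩, fun g => ⟨fgDist 1 g, ?_⟩⟩
    · exact (finite_setOf_fgDist_le 1 n).inter_of_right C
    · exact hC.inter (treeConvexCond_setOf_fgDist_le 1 n)
    · exact fun n hn => and_iff_left hn
  · rintro ⟨Cs, hCs, hlim⟩
    exact TreeConvexCond.of_eventually_mem_iff (l := Filter.atTop) (fun n => (hCs n).2)
      fun g => Filter.eventually_atTop.2 (hlim g)
end
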